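/- arXiv:0912.5094 — 9 statements merged into one kernel-verified Lean document; each statement's English description precedes it below -/
import Mathlib

section
/- Let p be a prime, R a commutative ring, and h ≥ 2. Let B be an invertible h × h matrix over W(R). Let a be an (h−1) × (h−1) matrix, b an (h−1) × 1 matrix, c a 1 × (h−1) matrix, and d a 1 × 1 matrix, all with entries in W(R), such that every entry of c lies in I_R and the block matrix φ = [a, v(b); c, d] is invertible. Set B' = [f(a), b; p·f(c), f(d)] · B · φ⁻¹. Then the ideals (p, w₀(B'_{hh})) and (p, w₀(B_{hh})) of R are equal; indeed w₀(B'_{hh}) ≡ u · w₀(B_{hh}) mod p for some unit u of R/(p). -/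
/-!
Reduce `B' φ = F B` (with `F = [f(a), b; p f(c), f(d)]`) along `x ↦ w₀(x) mod p`. This kills
`v(b)`, since `w₀ ∘ v = 0`, and `p f(c)`; and `w₀(f x) ≡ w₀(x)^p mod p`. So `φ` becomes block
lower triangular and `F` block upper triangular, and the bottom-right corner of the identity
reads `w₀(B'_hh) ē = ēᵖ w₀(B_hh)` with `ē = w₀(d) mod p`, a unit because
`det φ ≡ det a · d`. Hence `w₀(B'_hh) ≡ ēᵖ⁻¹ w₀(B_hh)`.
-/

open Matrix WittVector

theorem Ideal.sup_span_singleton_eq_of_associated {R : Type*} [CommRing R] {I : Ideal R}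
    {x y : R} (h : Associated (Ideal.Quotient.mk I x) (Ideal.Quotient.mk I y)) :
    I ⊔ Ideal.span {x} = I ⊔ Ideal.span {y} := by
  have key : ∀ z : R, I ⊔ Ideal.span {z} =
      (Ideal.span {Ideal.Quotient.mk I z}).comap (Ideal.Quotient.mk I) := fun z => by
    rw [← Set.image_singleton, ← Ideal.map_span,
      Ideal.comap_map_of_surjective' _ Ideal.Quotient.mk_surjective, Ideal.mk_ker, sup_comm]
  obtain ⟨u, hu⟩ := h
  rw [key, key, ← hu, Ideal.span_singleton_mul_right_unit u.isUnit]

namespace Matrix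

variable {α l m n o l' m' : Type*} [Fintype l] [Fintype m] [NonUnitalNonAssocSemiring α]

theorem toBlocks₂₂_mul_fromBlocks_zero₁₂ (X : Matrix (n ⊕ o) (l ⊕ m) α)
    (A : Matrix l l' α) (C : Matrix m l' α) (D : Matrix m m' α) :
    (X * fromBlocks A 0 C D).toBlocks₂₂ = X.toBlocks₂₂ * D := by
  ext i j
  simp [toBlocks₂₂, mul_apply, Fintype.sum_sum_type]

theorem toBlocks₂₂_fromBlocks_zero₂₁_mul (A : Matrix n l α) (B : Matrix n m α)
    (D : Matrix o m α) (Z : Matrix (l ⊕ m) (l' ⊕ m') α) :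
    (fromBlocks A B 0 D * Z).toBlocks₂₂ = D * Z.toBlocks₂₂ := by
  ext i j
  simp [toBlocks₂₂, mul_apply, Fintype.sum_sum_type]

end Matrix

namespace WittVector

variable (p : ℕ) [Fact p.Prime] (R : Type*) [CommRing R]

noncomputable def constantCoeffModP : WittVector p R →+* R ⧸ Ideal.span {(p : R)} :=
  (Ideal.Quotient.mk _).comp constantCoeff

variable {p R}

theorem constantCoeffModP_apply (x : WittVector p R) :
    constantCoeffModP p R x = Ideal.Quotient.mk _ (x.coeff 0) := rfl

theorem constantCoeffModP_natCast_self : constantCoeffModP p R p = 0 := by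
  rw [map_natCast, ← map_natCast (Ideal.Quotient.mk _), Ideal.Quotient.mk_singleton_self]

theorem constantCoeffModP_verschiebung (x : WittVector p R) :
    constantCoeffModP p R (verschiebung x) = 0 := by
  rw [constantCoeffModP_apply, verschiebung_coeff_zero, map_zero]

theorem coeff_frobenius_zero (x : WittVector p R) :
    (frobenius x).coeff 0 = x.coeff 0 ^ p + p * x.coeff 1 := by
  have h := ghostComponent_frobenius 0 x
  simp only [ghostComponent_apply, wittPolynomial_zero, wittPolynomial_one, zero_add,
    MvPolynomial.aeval_X, map_add, map_mul, map_pow, MvPolynomial.aeval_C] at h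
  rw [h]
  simp [add_comm]

theorem constantCoeffModP_frobenius (x : WittVector p R) :
    constantCoeffModP p R (frobenius x) = constantCoeffModP p R x ^ p := by
  rw [constantCoeffModP_apply, constantCoeffModP_apply, coeff_frobenius_zero, map_add, map_mul,
    map_pow, Ideal.Quotient.mk_singleton_self, zero_mul, add_zero]

variable {m : Type*} (a : Matrix m m (WittVector p R))
  (b : Matrix m (Fin 1) (WittVector p R)) (c : Matrix (Fin 1) m (WittVector p R))
  (d : Matrix (Fin 1) (Fin 1) (WittVector p R))

theorem map_constantCoeffModP_fromBlocks_verschiebung :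
    (fromBlocks a (b.map verschiebung) c d).map (constantCoeffModP p R) =
      fromBlocks (a.map (constantCoeffModP p R)) 0 (c.map (constantCoeffModP p R))
        (d.map (constantCoeffModP p R)) := by
  have hb : (b.map verschiebung).map (constantCoeffModP p R) = 0 := by
    ext i j
    exact constantCoeffModP_verschiebung _
  rw [fromBlocks_map, hb]

theorem isUnit_constantCoeffModP_of_isUnit_fromBlocks [Fintype m] [DecidableEq m]
    (h : IsUnit (fromBlocks a (b.map verschiebung) c d)) :
    IsUnit (constantCoeffModP p R (d 0 0)) := by
  have hdet := (isUnit_iff_isUnit_det _).mp (h.map (RingHom.mapMatrix (constantCoeffModP p R)))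
  rw [RingHom.mapMatrix_apply, map_constantCoeffModP_fromBlocks_verschiebung,
    det_fromBlocks_zero₁₂, det_unique (d.map _)] at hdet
  exact isUnit_of_mul_isUnit_right hdet

theorem constantCoeffModP_corner_of_mul_eq_mul [Fintype m]
    (B B' : Matrix (m ⊕ Fin 1) (m ⊕ Fin 1) (WittVector p R))
    (h : B' * fromBlocks a (b.map verschiebung) c d =
      fromBlocks (a.map frobenius) b ((p : WittVector p R) • c.map frobenius)
        (d.map frobenius) * B) :
    constantCoeffModP p R (B' (Sum.inr 0) (Sum.inr 0)) * constantCoeffModP p R (d 0 0) =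
      constantCoeffModP p R (d 0 0) ^ p * constantCoeffModP p R (B (Sum.inr 0) (Sum.inr 0)) := by
  have hpc : ((p : WittVector p R) • c.map frobenius).map (constantCoeffModP p R) = 0 := by
    ext i j
    rw [map_apply, Matrix.smul_apply, smul_eq_mul, map_mul, constantCoeffModP_natCast_self,
      zero_mul]
    rfl
  have h₂₂ := congrArg (fun M => (M.map (constantCoeffModP p R)).toBlocks₂₂) h
  rw [Matrix.map_mul, Matrix.map_mul, map_constantCoeffModP_fromBlocks_verschiebung,
    fromBlocks_map, hpc, toBlocks₂₂_mul_fromBlocks_zero₁₂,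
    toBlocks₂₂_fromBlocks_zero₂₁_mul] at h₂₂
  simpa [mul_apply, toBlocks₂₂, constantCoeffModP_frobenius] using congrFun₂ h₂₂ 0 0

end WittVector

open Matrix WittVector in
theorem display_change_of_coordinates_ideal_invariant_general (p : ℕ) [Fact p.Prime]
    (R : Type) [CommRing R] (n : ℕ)
    (B : Matrix (Fin n ⊕ Fin 1) (Fin n ⊕ Fin 1) (WittVector p R))
    (a : Matrix (Fin n) (Fin n) (WittVector p R))
    (b : Matrix (Fin n) (Fin 1) (WittVector p R))
    (c : Matrix (Fin 1) (Fin n) (WittVector p R))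
    (d : Matrix (Fin 1) (Fin 1) (WittVector p R))
    (φ : Matrix (Fin n ⊕ Fin 1) (Fin n ⊕ Fin 1) (WittVector p R))
    (hφdef : φ = Matrix.fromBlocks a (b.map ⇑(WittVector.verschiebung (p := p) (R := R))) c d)
    (hφ : IsUnit φ)
    (B' : Matrix (Fin n ⊕ Fin 1) (Fin n ⊕ Fin 1) (WittVector p R))
    (hB'def : B' = Matrix.fromBlocks
        (a.map ⇑(WittVector.frobenius : WittVector p R →+* WittVector p R)) b
        ((p : WittVector p R) • c.map ⇑(WittVector.frobenius : WittVector p R →+* WittVector p R))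
        (d.map ⇑(WittVector.frobenius : WittVector p R →+* WittVector p R)) * B * φ⁻¹) :
    Ideal.span {(p : R), (B' (Sum.inr 0) (Sum.inr 0)).coeff 0} =
      Ideal.span {(p : R), (B (Sum.inr 0) (Sum.inr 0)).coeff 0} ∧
    ∃ u : R ⧸ Ideal.span {(p : R)}, IsUnit u ∧
      Ideal.Quotient.mk (Ideal.span {(p : R)}) ((B' (Sum.inr 0) (Sum.inr 0)).coeff 0) =
        u * Ideal.Quotient.mk (Ideal.span {(p : R)}) ((B (Sum.inr 0) (Sum.inr 0)).coeff 0) := by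
  set e := constantCoeffModP p R (d 0 0)
  have he : IsUnit e := isUnit_constantCoeffModP_of_isUnit_fromBlocks a b c d (hφdef ▸ hφ)
  have hB'φ := congrArg (· * φ) hB'def
  simp only [nonsing_inv_mul_cancel_right _ _ ((isUnit_iff_isUnit_det φ).mp hφ)] at hB'φ
  have hcorner := constantCoeffModP_corner_of_mul_eq_mul a b c d B B' (hφdef ▸ hB'φ)
  have hu : Ideal.Quotient.mk _ ((B' (Sum.inr 0) (Sum.inr 0)).coeff 0) =
      e ^ (p - 1) * Ideal.Quotient.mk _ ((B (Sum.inr 0) (Sum.inr 0)).coeff 0) := by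
    rw [← he.mul_left_inj, mul_right_comm, ← pow_succ,
      Nat.sub_add_cancel (Fact.out : p.Prime).one_le]
    exact hcorner
  refine ⟨?_, e ^ (p - 1), he.pow _, hu⟩
  rw [Ideal.span_insert, Ideal.span_insert]
  exact Ideal.sup_span_singleton_eq_of_associated
    (Associated.symm ⟨(he.pow (p - 1)).unit, by rw [hu, mul_comm]; rfl⟩)

open Matrix WittVector in
/-- Invariance of the ideal `(p, w₀(B_{hh}))` under the change-of-coordinates formula for
matrix forms of displays of height `h = n + 1 ≥ 2` and dimension `h − 1`:
if `φ = [a, v(b); c, d]` is invertible with the entries of `c` in `I_R = v(W(R))`, and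
`B' = [f(a), b; p·f(c), f(d)] · B · φ⁻¹`, then `w₀(B'_{hh}) ≡ u · w₀(B_{hh}) mod p` for a
unit `u` of `R/(p)`, and `(p, w₀(B'_{hh})) = (p, w₀(B_{hh}))`. -/
theorem display_change_of_coordinates_ideal_invariant (p : ℕ) [Fact p.Prime]
    (R : Type) [CommRing R] (n : ℕ) (hn : 1 ≤ n)
    (B : Matrix (Fin n ⊕ Fin 1) (Fin n ⊕ Fin 1) (WittVector p R)) (hB : IsUnit B)
    (a : Matrix (Fin n) (Fin n) (WittVector p R))
    (b : Matrix (Fin n) (Fin 1) (WittVector p R))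
    (c : Matrix (Fin 1) (Fin n) (WittVector p R))
    (d : Matrix (Fin 1) (Fin 1) (WittVector p R))
    (hc : ∀ i j, c i j ∈
      Set.range ⇑(WittVector.verschiebung : WittVector p R →+ WittVector p R))
    (φ : Matrix (Fin n ⊕ Fin 1) (Fin n ⊕ Fin 1) (WittVector p R))
    (hφdef : φ = Matrix.fromBlocks a (b.map ⇑(WittVector.verschiebung (p := p) (R := R))) c d)
    (hφ : IsUnit φ)
    (B' : Matrix (Fin n ⊕ Fin 1) (Fin n ⊕ Fin 1) (WittVector p R))
    (hB'def : B' = Matrix.fromBlocks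
        (a.map ⇑(WittVector.frobenius : WittVector p R →+* WittVector p R)) b
        ((p : WittVector p R) • c.map ⇑(WittVector.frobenius : WittVector p R →+* WittVector p R))
        (d.map ⇑(WittVector.frobenius : WittVector p R →+* WittVector p R)) * B * φ⁻¹) :
    Ideal.span {(p : R), (B' (Sum.inr 0) (Sum.inr 0)).coeff 0} =
      Ideal.span {(p : R), (B (Sum.inr 0) (Sum.inr 0)).coeff 0} ∧
    ∃ u : R ⧸ Ideal.span {(p : R)}, IsUnit u ∧
      Ideal.Quotient.mk (Ideal.span {(p : R)}) ((B' (Sum.inr 0) (Sum.inr 0)).coeff 0) =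
        u * Ideal.Quotient.mk (Ideal.span {(p : R)}) ((B (Sum.inr 0) (Sum.inr 0)).coeff 0) :=
  display_change_of_coordinates_ideal_invariant_general p R n B a b c d φ hφdef hφ B' hB'def
end

section
/- Let p be a prime, A a commutative ring, and I an ideal of A with I·I = 0. Then the kernel of the induced ring homomorphism W(A) → W(A/I) of p-typical Witt rings (which consists of the Witt vectors all of whose coordinates lie in I) is a square-zero ideal of W(A). -/
/-!
The question is universal: `x * y` is the image of the product `a * b` of the generic Witt vectors
`a = (X₀, X₁, …)`, `b = (Y₀, Y₁, …)` over `ℤ[X, Y]` under `X ↦ x, Y ↦ y`, and this map kills every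
mixed monomial `Xᵢ Yⱼ` because `I * I = 0`. The ghost components of `a * b` are products of an
element of `(X)` and one of `(Y)`, hence lie in the ideal of mixed monomials. That monomial ideal
is `p`-saturated in `ℤ[X, Y]`, so solving the ghost equations `∑ pⁱ cᵢ ^ p ^ (n - i) = wₙ` for the
Witt coordinates `cₙ` of `a * b` keeps them inside it.
-/

open MvPolynomial Finset

theorem Ideal.mem_of_pow_mul_mem {R : Type*} [CommSemiring R] {J : Ideal R} {a r : R}
    (hJ : ∀ r, a * r ∈ J → r ∈ J) (n : ℕ) (h : a ^ n * r ∈ J) : r ∈ J := by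
  induction n with
  | zero => simpa using h
  | succ k ih => exact ih (hJ _ (by rwa [pow_succ', mul_assoc] at h))

namespace MvPolynomial

theorem mem_span_monomial_of_natCast_mul_mem {σ : Type*} {s : Set (σ →₀ ℕ)} {n : ℕ} (hn : n ≠ 0)
    {f : MvPolynomial σ ℤ} (h : (n : MvPolynomial σ ℤ) * f ∈ Ideal.span ((monomial · 1) '' s)) :
    f ∈ Ideal.span ((monomial · (1 : ℤ)) '' s) := by
  rw [← nsmul_eq_mul, ← natCast_zsmul] at h
  rw [mem_ideal_span_monomial_image] at h ⊢
  rwa [support_smul_eq (Int.natCast_ne_zero.mpr hn)] at h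

variable {σ τ : Type*}

noncomputable def mixedMonomialIdeal : Ideal (MvPolynomial (σ ⊕ τ) ℤ) :=
  Ideal.span ((monomial · 1) '' Set.range fun ij : σ × τ =>
    Finsupp.single (Sum.inl ij.1) 1 + Finsupp.single (Sum.inr ij.2) 1)

theorem mixedMonomialIdeal_eq_span :
    (mixedMonomialIdeal : Ideal (MvPolynomial (σ ⊕ τ) ℤ)) =
      Ideal.span (Set.range fun ij : σ × τ => X (Sum.inl ij.1) * X (Sum.inr ij.2)) := by
  rw [mixedMonomialIdeal, ← Set.range_comp]
  congr! with ⟨i, j⟩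
  simp only [Function.comp_apply, monomial_single_add, pow_one, X]

theorem X_inl_mul_X_inr_mem_mixedMonomialIdeal (i : σ) (j : τ) :
    (X (Sum.inl i) * X (Sum.inr j) : MvPolynomial (σ ⊕ τ) ℤ) ∈ mixedMonomialIdeal :=
  mixedMonomialIdeal_eq_span ▸ Ideal.subset_span ⟨(i, j), rfl⟩

theorem span_X_inl_mul_span_X_inr_le :
    Ideal.span (X '' Set.range Sum.inl) * Ideal.span (X '' Set.range Sum.inr) ≤
      (mixedMonomialIdeal : Ideal (MvPolynomial (σ ⊕ τ) ℤ)) := by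
  rw [Ideal.span_mul_span, Ideal.span_le]
  rintro _ ⟨_, ⟨_, ⟨i, rfl⟩, rfl⟩, _, ⟨_, ⟨j, rfl⟩, rfl⟩, rfl⟩
  exact X_inl_mul_X_inr_mem_mixedMonomialIdeal i j

theorem mixedMonomialIdeal_le_ker_aeval {A : Type*} [CommRing A] {f : σ ⊕ τ → A}
    (hf : ∀ i j, f (Sum.inl i) * f (Sum.inr j) = 0) :
    mixedMonomialIdeal ≤ RingHom.ker (aeval f : MvPolynomial (σ ⊕ τ) ℤ →ₐ[ℤ] A) := by
  rw [mixedMonomialIdeal_eq_span, Ideal.span_le]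
  rintro _ ⟨⟨i, j⟩, rfl⟩
  simp [hf]

end MvPolynomial

namespace WittVector

variable {p : ℕ} [Fact p.Prime] {R : Type*} [CommRing R] {J : Ideal R} {w : WittVector p R}

theorem ghostComponent_eq_sum (w : WittVector p R) (n : ℕ) :
    ghostComponent n w = ∑ i ∈ range (n + 1), (p : R) ^ i * w.coeff i ^ p ^ (n - i) := by
  rw [ghostComponent_apply, aeval_wittPolynomial]

theorem sum_range_pow_mul_coeff_pow_mem {m : ℕ} (h : ∀ i < m, w.coeff i ∈ J) (n : ℕ) :
    ∑ i ∈ range m, (p : R) ^ i * w.coeff i ^ p ^ (n - i) ∈ J :=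
  J.sum_mem fun i hi => J.mul_mem_left _ <|
    J.pow_mem_of_mem (h i (mem_range.mp hi)) _ (pow_pos (Fact.out : p.Prime).pos _)

theorem ghostComponent_mem_of_coeff_mem (h : ∀ n, w.coeff n ∈ J) (n : ℕ) :
    ghostComponent n w ∈ J :=
  ghostComponent_eq_sum w n ▸ sum_range_pow_mul_coeff_pow_mem (fun i _ => h i) n

theorem coeff_mem_of_ghostComponent_mem (hJ : ∀ r, (p : R) * r ∈ J → r ∈ J)
    (h : ∀ n, ghostComponent n w ∈ J) (n : ℕ) : w.coeff n ∈ J := by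
  induction n using Nat.strong_induction_on with
  | _ n ih =>
    have hghost := h n
    rw [ghostComponent_eq_sum, sum_range_succ, Nat.sub_self, pow_zero, pow_one] at hghost
    exact J.mem_of_pow_mul_mem hJ n <|
      (J.add_mem_iff_right (sum_range_pow_mul_coeff_pow_mem ih n)).mp hghost

theorem coeff_mul_mem_mixedMonomialIdeal (n : ℕ) :
    (mk p (X ∘ Sum.inl) * mk p (X ∘ Sum.inr) : WittVector p (MvPolynomial (ℕ ⊕ ℕ) ℤ)).coeff n ∈
      mixedMonomialIdeal := by
  refine coeff_mem_of_ghostComponent_mem (fun _ => mem_span_monomial_of_natCast_mul_mem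
    (Fact.out : p.Prime).ne_zero) (fun k => ?_) n
  rw [map_mul]
  refine span_X_inl_mul_span_X_inr_le (Ideal.mul_mem_mul ?_ ?_) <;>
    refine ghostComponent_mem_of_coeff_mem (fun i => ?_) k <;>
    exact Ideal.subset_span (Set.mem_image_of_mem _ ⟨i, rfl⟩)

variable {A : Type*} [CommRing A]

theorem mul_eq_zero_of_coeff_mem {I J : Ideal A} (hIJ : I * J = ⊥) {x y : WittVector p A}
    (hx : ∀ n, x.coeff n ∈ I) (hy : ∀ n, y.coeff n ∈ J) : x * y = 0 := by
  let φ : MvPolynomial (ℕ ⊕ ℕ) ℤ →+* A :=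
    (aeval (Sum.elim x.coeff y.coeff) : MvPolynomial (ℕ ⊕ ℕ) ℤ →ₐ[ℤ] A)
  have hφx : map φ (mk p (X ∘ Sum.inl)) = x := ext fun n => by simp [φ, map_coeff]
  have hφy : map φ (mk p (X ∘ Sum.inr)) = y := ext fun n => by simp [φ, map_coeff]
  have hφ : mixedMonomialIdeal ≤ RingHom.ker φ := mixedMonomialIdeal_le_ker_aeval fun i j => by
    simpa [hIJ] using Ideal.mul_mem_mul (hx i) (hy j)
  rw [← hφx, ← hφy, ← map_mul]
  exact ext fun n => by rw [map_coeff, zero_coeff]; exact hφ (coeff_mul_mem_mixedMonomialIdeal n)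

theorem mem_ker_map_quotient_mk_iff (I : Ideal A) (x : WittVector p A) :
    x ∈ RingHom.ker (map (Ideal.Quotient.mk I)) ↔ ∀ n, x.coeff n ∈ I := by
  simp [WittVector.ext_iff, map_coeff, Ideal.Quotient.eq_zero_iff_mem]

end WittVector

/-- If `I` is a square-zero ideal of `A`, then the kernel of the induced map
`W(A) → W(A/I)` of `p`-typical Witt rings (which consists of the Witt vectors all of whose
coordinates lie in `I`) is a square-zero ideal of `W(A)`. -/
theorem witt_ker_map_quotient_sq_zero (p : ℕ) [Fact p.Prime] (A : Type) [CommRing A]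
    (I : Ideal A) (hI : I * I = ⊥) :
    (∀ x : WittVector p A,
      x ∈ RingHom.ker (WittVector.map (p := p) (Ideal.Quotient.mk I)) ↔
        ∀ n, x.coeff n ∈ I) ∧
    RingHom.ker (WittVector.map (p := p) (Ideal.Quotient.mk I)) *
      RingHom.ker (WittVector.map (p := p) (Ideal.Quotient.mk I)) = ⊥ := by
  refine ⟨WittVector.mem_ker_map_quotient_mk_iff I, eq_bot_iff.mpr <| Ideal.mul_le.mpr ?_⟩
  intro x hx y hy
  rw [WittVector.mem_ker_map_quotient_mk_iff] at hx hy
  exact Ideal.mem_bot.mpr (WittVector.mul_eq_zero_of_coeff_mem hI hx hy)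
end

section
/- Let p be a prime, R a commutative ring of characteristic p, and I an ideal of R with I·I = 0. Let K denote the kernel of W(R) → W(R/I). Let h ≥ 2, let B be an invertible h × h matrix over W(R), let s be an h × h matrix with entries in K, and let a be an (h−1) × (h−1) matrix, b an (h−1) × 1 matrix, c a 1 × (h−1) matrix, and d a 1 × 1 matrix, all with entries in K. Set N = [a, v(b); c, d] and M = [f(a), b; p·f(c), f(d)] in block form. Then I + N is invertible, M = [0, b; 0, 0], and (I + M)(B + s)(I + N)⁻¹ = B + s + [0, b; 0, 0]·B − B·N. -/
/-!
The Witt coordinates of an element of `K` all lie in `I`. A Witt multiplication polynomial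
vanishes as soon as either argument is zero, so it only involves mixed monomials, whence
`K * K = 0`; Frobenius acts on coordinates by `x ↦ x ^ p`, so it kills `K`. Thus `N * N = 0`,
`(1 + N)⁻¹ = 1 - N`, `M = [0, b; 0, 0]`, and expanding `(1 + M) (B + s) (1 - N)` every product
of two matrices with entries in `K` drops out.
-/

open MvPolynomial

namespace MvPolynomial

variable {σ R S : Type*} [CommSemiring R] [CommRing S] [Algebra R S]

theorem aeval_sub_algebraMap_constantCoeff_mem_span (φ : σ → S) (P : MvPolynomial σ R) :
    aeval φ P - algebraMap R S (constantCoeff P) ∈ Ideal.span (Set.range φ) := by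
  induction P using MvPolynomial.induction_on with
  | C a => simp
  | add P Q hP hQ => simpa [add_sub_add_comm] using add_mem hP hQ
  | mul_X P v _ =>
    simpa using Ideal.mul_mem_left _ (aeval φ P) (Ideal.subset_span (Set.mem_range_self v))

theorem aeval_add_add_algebraMap_constantCoeff {φ ψ : σ → S} (h : ∀ v w, φ v * ψ w = 0)
    (P : MvPolynomial σ R) :
    aeval (φ + ψ) P + algebraMap R S (constantCoeff P) = aeval φ P + aeval ψ P := by
  have hspan : Ideal.span (Set.range φ) * Ideal.span (Set.range ψ) = ⊥ := by
    rw [Ideal.span_mul_span', Ideal.span_eq_bot]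
    rintro _ ⟨_, ⟨v, rfl⟩, _, ⟨w, rfl⟩, rfl⟩
    exact h v w
  have cross {A B : S} (hA : A ∈ Ideal.span (Set.range φ)) (hB : B ∈ Ideal.span (Set.range ψ)) :
      A * B = 0 := by
    simpa [hspan] using Ideal.mul_mem_mul hA hB
  induction P using MvPolynomial.induction_on with
  | C a => simp
  | add P Q hP hQ => simp only [map_add]; linear_combination hP + hQ
  | mul_X P v ih =>
    have h₁ := cross (aeval_sub_algebraMap_constantCoeff_mem_span φ P)
      (Ideal.subset_span ⟨v, rfl⟩)
    have h₂ := cross (Ideal.subset_span ⟨v, rfl⟩)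
      (aeval_sub_algebraMap_constantCoeff_mem_span ψ P)
    simp only [map_mul, aeval_X, constantCoeff_X, mul_zero, map_zero, add_zero, Pi.add_apply]
    linear_combination (φ v + ψ v) * ih + h₁ + h₂

end MvPolynomial

namespace WittVector

variable {p : ℕ} [Fact p.Prime] {R : Type*} [CommRing R]

theorem mul_eq_zero_of_coeff_mul_coeff_eq_zero {x y : WittVector p R}
    (h : ∀ i j, x.coeff i * y.coeff j = 0) : x * y = 0 := by
  ext n
  have hsplit : Function.uncurry ![x.coeff, y.coeff] =
      Function.uncurry ![x.coeff, (0 : WittVector p R).coeff] +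
        Function.uncurry ![(0 : WittVector p R).coeff, y.coeff] := by
    ext ⟨i, k⟩
    fin_cases i <;> simp [zero_coeff]
  have key := aeval_add_add_algebraMap_constantCoeff (R := ℤ)
    (φ := Function.uncurry ![x.coeff, (0 : WittVector p R).coeff])
    (ψ := Function.uncurry ![(0 : WittVector p R).coeff, y.coeff]) ?_ (wittMul p n)
  · rw [← peval, ← hsplit, ← peval, ← peval, ← mul_coeff, ← mul_coeff, ← mul_coeff,
      constantCoeff_wittMul] at key
    simpa using key
  · rintro ⟨i, k⟩ ⟨j, l⟩
    fin_cases i <;> fin_cases j <;> simp [zero_coeff, h]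

theorem mem_ker_map_iff {S : Type*} [CommRing S] (f : R →+* S) (x : WittVector p R) :
    x ∈ RingHom.ker (map f) ↔ ∀ n, x.coeff n ∈ RingHom.ker f := by
  simp [RingHom.mem_ker, WittVector.ext_iff, map_coeff]

theorem verschiebung_mem_ker_map {S : Type*} [CommRing S] {f : R →+* S} {x : WittVector p R}
    (hx : x ∈ RingHom.ker (map f)) : verschiebung x ∈ RingHom.ker (map f) := by
  rw [RingHom.mem_ker] at hx ⊢
  rw [map_verschiebung, hx, map_zero]

variable {I : Ideal R}

theorem ker_map_mk_mul_self_eq_bot (hI : I * I = ⊥) :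
    RingHom.ker (map (p := p) (Ideal.Quotient.mk I)) * RingHom.ker (map (Ideal.Quotient.mk I)) =
      ⊥ := by
  refine eq_bot_iff.2 (Ideal.mul_le.2 fun x hx y hy => ?_)
  rw [mem_ker_map_iff, Ideal.mk_ker] at hx hy
  refine (Submodule.mem_bot _).2 (mul_eq_zero_of_coeff_mul_coeff_eq_zero fun i j => ?_)
  simpa [hI] using Ideal.mul_mem_mul (hx i) (hy j)

theorem frobenius_eq_zero_of_mem_ker_map_mk [CharP R p] (hI : I * I = ⊥) {x : WittVector p R}
    (hx : x ∈ RingHom.ker (map (Ideal.Quotient.mk I))) : frobenius x = 0 := by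
  ext n
  rw [coeff_frobenius_charP, zero_coeff]
  have hsq : x.coeff n ^ 2 = 0 := by
    rw [mem_ker_map_iff, Ideal.mk_ker] at hx
    simpa [hI, sq] using Ideal.mul_mem_mul (hx n) (hx n)
  exact pow_eq_zero_of_le (Fact.out : p.Prime).two_le hsq

end WittVector

namespace Matrix

variable {α l m n o : Type*}

theorem fromBlocks_apply_mem {S : Set α} {A : Matrix n l α} {B : Matrix n m α}
    {C : Matrix o l α} {D : Matrix o m α} (hA : ∀ i j, A i j ∈ S) (hB : ∀ i j, B i j ∈ S)
    (hC : ∀ i j, C i j ∈ S) (hD : ∀ i j, D i j ∈ S) : ∀ i j, fromBlocks A B C D i j ∈ S := by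
  rintro (i | i) (j | j)
  exacts [hA i j, hB i j, hC i j, hD i j]

theorem mul_eq_zero_of_mul_self_eq_bot [Fintype n] [CommRing α] {K : Ideal α} (hK : K * K = ⊥)
    {X : Matrix m n α} {Y : Matrix n o α} (hX : ∀ i j, X i j ∈ K) (hY : ∀ i j, Y i j ∈ K) :
    X * Y = 0 := by
  ext i j
  refine Finset.sum_eq_zero fun k _ => ?_
  simpa [hK] using Ideal.mul_mem_mul (hX i k) (hY k j)

end Matrix

open Matrix WittVector in
theorem display_lift_isomorphism_formula_general (p : ℕ) [Fact p.Prime]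
    (R : Type) [CommRing R] [CharP R p] (I : Ideal R) (hI : I * I = ⊥)
    (K : Ideal (WittVector p R))
    (hK : K = RingHom.ker (WittVector.map (p := p) (Ideal.Quotient.mk I)))
    (n : ℕ)
    (B : Matrix (Fin n ⊕ Fin 1) (Fin n ⊕ Fin 1) (WittVector p R))
    (s : Matrix (Fin n ⊕ Fin 1) (Fin n ⊕ Fin 1) (WittVector p R))
    (hs : ∀ i j, s i j ∈ K)
    (a : Matrix (Fin n) (Fin n) (WittVector p R)) (ha : ∀ i j, a i j ∈ K)
    (b : Matrix (Fin n) (Fin 1) (WittVector p R)) (hb : ∀ i j, b i j ∈ K)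
    (c : Matrix (Fin 1) (Fin n) (WittVector p R)) (hc : ∀ i j, c i j ∈ K)
    (d : Matrix (Fin 1) (Fin 1) (WittVector p R)) (hd : ∀ i j, d i j ∈ K)
    (N : Matrix (Fin n ⊕ Fin 1) (Fin n ⊕ Fin 1) (WittVector p R))
    (hN : N = Matrix.fromBlocks a (b.map ⇑(WittVector.verschiebung (p := p) (R := R))) c d)
    (M : Matrix (Fin n ⊕ Fin 1) (Fin n ⊕ Fin 1) (WittVector p R))
    (hM : M = Matrix.fromBlocks
      (a.map ⇑(WittVector.frobenius : WittVector p R →+* WittVector p R)) b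
      ((p : WittVector p R) • c.map ⇑(WittVector.frobenius : WittVector p R →+* WittVector p R))
      (d.map ⇑(WittVector.frobenius : WittVector p R →+* WittVector p R))) :
    IsUnit (1 + N) ∧
    M = Matrix.fromBlocks 0 b 0 0 ∧
    (1 + M) * (B + s) * (1 + N)⁻¹ =
      B + s + Matrix.fromBlocks 0 b 0 0 * B - B * N := by
  have hKK : K * K = ⊥ := hK ▸ ker_map_mk_mul_self_eq_bot hI
  have hfrob {m₁ m₂ : Type} {x : Matrix m₁ m₂ (WittVector p R)} (hx : ∀ i j, x i j ∈ K) :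
      x.map frobenius = 0 := by
    refine Matrix.ext fun i j => ?_
    exact frobenius_eq_zero_of_mem_ker_map_mk hI (hK ▸ hx i j)
  have hMeq : M = fromBlocks 0 b 0 0 := by rw [hM, hfrob ha, hfrob hc, hfrob hd, smul_zero]
  have hNK : ∀ i j, N i j ∈ K :=
    hN ▸ fromBlocks_apply_mem ha (fun i j => hK ▸ verschiebung_mem_ker_map (hK ▸ hb i j)) hc hd
  have hMK : ∀ i j, M i j ∈ K := by
    rw [hMeq]
    exact fromBlocks_apply_mem (by simp) hb (by simp) (by simp)
  have hMBK : ∀ i j, (M * B) i j ∈ K := fun i j =>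
    mul_apply (M := M) ▸ Submodule.sum_mem _ fun k _ => Ideal.mul_mem_right _ _ (hMK i k)
  have hNN : N * N = 0 := mul_eq_zero_of_mul_self_eq_bot hKK hNK hNK
  have hinv : (1 + N) * (1 - N) = 1 :=
    calc (1 + N) * (1 - N) = 1 - N * N := by noncomm_ring
      _ = 1 := by rw [hNN, sub_zero]
  refine ⟨IsUnit.of_mul_eq_one _ hinv, hMeq, ?_⟩
  rw [inv_eq_right_inv hinv, ← hMeq]
  calc (1 + M) * (B + s) * (1 - N)
      = B + s + M * B - B * N + (M * s - s * N - M * B * N - M * s * N) := by noncomm_ring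
    _ = B + s + M * B - B * N := by
      rw [mul_eq_zero_of_mul_self_eq_bot hKK hMK hs, mul_eq_zero_of_mul_self_eq_bot hKK hs hNK,
        mul_eq_zero_of_mul_self_eq_bot hKK hMBK hNK]
      simp

open Matrix WittVector in
/-- Let `R` have characteristic `p`, `I² = 0`, and let `K` be the kernel of `W(R) → W(R/I)`.
For `B` invertible of size `h = n + 1 ≥ 2`, `s` with entries in `K`, and blocks `a, b, c, d`
with entries in `K`, setting `N = [a, v(b); c, d]` and `M = [f(a), b; p·f(c), f(d)]`:
`1 + N` is invertible, `M = [0, b; 0, 0]`, and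
`(1 + M)(B + s)(1 + N)⁻¹ = B + s + [0, b; 0, 0]·B − B·N`. -/
theorem display_lift_isomorphism_formula (p : ℕ) [Fact p.Prime]
    (R : Type) [CommRing R] [CharP R p] (I : Ideal R) (hI : I * I = ⊥)
    (K : Ideal (WittVector p R))
    (hK : K = RingHom.ker (WittVector.map (p := p) (Ideal.Quotient.mk I)))
    (n : ℕ) (hn : 1 ≤ n)
    (B : Matrix (Fin n ⊕ Fin 1) (Fin n ⊕ Fin 1) (WittVector p R)) (hB : IsUnit B)
    (s : Matrix (Fin n ⊕ Fin 1) (Fin n ⊕ Fin 1) (WittVector p R))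
    (hs : ∀ i j, s i j ∈ K)
    (a : Matrix (Fin n) (Fin n) (WittVector p R)) (ha : ∀ i j, a i j ∈ K)
    (b : Matrix (Fin n) (Fin 1) (WittVector p R)) (hb : ∀ i j, b i j ∈ K)
    (c : Matrix (Fin 1) (Fin n) (WittVector p R)) (hc : ∀ i j, c i j ∈ K)
    (d : Matrix (Fin 1) (Fin 1) (WittVector p R)) (hd : ∀ i j, d i j ∈ K)
    (N : Matrix (Fin n ⊕ Fin 1) (Fin n ⊕ Fin 1) (WittVector p R))
    (hN : N = Matrix.fromBlocks a (b.map ⇑(WittVector.verschiebung (p := p) (R := R))) c d)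
    (M : Matrix (Fin n ⊕ Fin 1) (Fin n ⊕ Fin 1) (WittVector p R))
    (hM : M = Matrix.fromBlocks
      (a.map ⇑(WittVector.frobenius : WittVector p R →+* WittVector p R)) b
      ((p : WittVector p R) • c.map ⇑(WittVector.frobenius : WittVector p R →+* WittVector p R))
      (d.map ⇑(WittVector.frobenius : WittVector p R →+* WittVector p R))) :
    IsUnit (1 + N) ∧
    M = Matrix.fromBlocks 0 b 0 0 ∧
    (1 + M) * (B + s) * (1 + N)⁻¹ =
      B + s + Matrix.fromBlocks 0 b 0 0 * B - B * N :=
  display_lift_isomorphism_formula_general p R I hI K hK n B s hs a ha b hb c hc d hd N hN M hM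
end

section
/- Let p be a prime, k a field of characteristic p, and set R = k[ε]/(ε²) with K = ker(W(R) → W(k)). Let h ≥ 2 and let B be an invertible h × h matrix over W(k), viewed over W(R), whose lower-right entry B_{hh} lies in the ideal I = v(W(R)). Then the set of h × h matrices of the form [0, b; 0, 0]·B − B·[a, v(b); c, d], where a ranges over (h−1) × (h−1) matrices, b over (h−1) × 1 matrices, c over 1 × (h−1) matrices, and d over 1 × 1 matrices with entries in K, equals the set of h × h matrices t with entries in K for which there exists λ ∈ K such that t_{ih} − λ·B_{ih} ∈ I for all 1 ≤ i ≤ h (i.e., the final column of t is congruent mod I to a multiple of the final column of B). -/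
/-!
Elements of `K` have Witt coordinates of square zero, so Frobenius kills them and the projection
formula `x · v(y) = v(y · F x)` gives `K · I = 0`. Hence `[0, b; 0, 0] · B` has zero last column
(its only possibly nonzero entries there are `b_i · B_hh ∈ K · I`), and the last column of
`[0, b; 0, 0] · B - B · [a, v b; c, d]` is `-∑ B_ij v(b_j) - d · B_{·h} ≡ -d · B_{·h} (mod I)`.
Conversely, given `t`, the upper entries of the last column of `B⁻¹ t` agree with those of
`B⁻¹ (t - λ B)`, so they lie in `I`; write them as `-v(b_i)` (then `b_i ∈ K`, as `v` reflects `K`)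
and take `[a, v b; c, d] = B⁻¹ ([0, b; 0, 0] · B - t)`, whose upper-right block is indeed `v b`.
-/

open Matrix WittVector

namespace WittVector

variable {p : ℕ} [Fact p.Prime] {R S : Type*} [CommRing R] [CommRing S]

theorem ker_constantCoeff_eq_range_verschiebung :
    (RingHom.ker (constantCoeff : WittVector p R →+* R) : Set (WittVector p R)) =
      Set.range (verschiebung (p := p)) := by
  ext x
  simp only [SetLike.mem_coe, RingHom.mem_ker, constantCoeff_apply, Set.mem_range]
  refine ⟨fun hx => ⟨x.shift 1, ?_⟩, ?_⟩
  · exact (eq_iterate_verschiebung (n := 1) (by simpa using hx)).symm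
  · rintro ⟨y, rfl⟩
    rfl

theorem verschiebung_mem_ker_map_iff (f : R →+* S) (x : WittVector p R) :
    verschiebung x ∈ RingHom.ker (map (p := p) f) ↔ x ∈ RingHom.ker (map (p := p) f) := by
  simp only [RingHom.mem_ker, map_verschiebung]
  exact _root_.map_eq_zero_iff _ (verschiebung_injective p S)

theorem frobenius_eq_zero_of_mem_ker_map [CharP R p] {f : R →+* S}
    (hf : ∀ r ∈ RingHom.ker f, r ^ p = 0) {x : WittVector p R}
    (hx : x ∈ RingHom.ker (map (p := p) f)) : frobenius x = 0 := by
  ext n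
  rw [coeff_frobenius_charP, zero_coeff]
  apply hf
  rw [RingHom.mem_ker] at hx ⊢
  simpa [map_coeff] using congrArg (coeff · n) hx

theorem mul_verschiebung_eq_zero_of_mem_ker_map [CharP R p] {f : R →+* S}
    (hf : ∀ r ∈ RingHom.ker f, r ^ p = 0) {x : WittVector p R}
    (hx : x ∈ RingHom.ker (map (p := p) f)) (y : WittVector p R) : x * verschiebung y = 0 := by
  rw [mul_comm, ← verschiebung_mul_frobenius, frobenius_eq_zero_of_mem_ker_map hf hx, mul_zero,
    map_zero]

end WittVector

theorem TrivSqZeroExt.pow_eq_zero_of_mem_kerIdeal {R M : Type*} [CommSemiring R] [AddCommMonoid M]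
    [Module R M] [Module Rᵐᵒᵖ M] [IsCentralScalar R M] {n : ℕ} (hn : 2 ≤ n)
    {x : TrivSqZeroExt R M} (hx : x ∈ kerIdeal R M) : x ^ n = 0 :=
  pow_eq_zero_of_le hn <| by simpa using Ideal.pow_mem_pow hx 2

theorem Ideal.matrix_mul_mem_right {A n : Type*} [CommRing A] [Fintype n] [DecidableEq n]
    {K : Ideal A} {M : Matrix n n A} (hM : M ∈ K.matrix n) (N : Matrix n n A) :
    M * N ∈ K.matrix n := fun i _ =>
  Ideal.sum_mem _ fun l _ => K.mul_mem_right _ (hM i l)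

theorem Ideal.fromBlocks_mem_matrix {A m n : Type*} [CommRing A] [Fintype m] [DecidableEq m]
    [Fintype n] [DecidableEq n] {K : Ideal A} {a : Matrix m m A} {b : Matrix m n A}
    {c : Matrix n m A} {d : Matrix n n A} (ha : ∀ i j, a i j ∈ K) (hb : ∀ i j, b i j ∈ K)
    (hc : ∀ i j, c i j ∈ K) (hd : ∀ i j, d i j ∈ K) :
    fromBlocks a b c d ∈ K.matrix (m ⊕ n) := by
  rintro (i | i) (j | j)
  exacts [ha i j, hb i j, hc i j, hd i j]

section BlockCoboundary

variable {A ι : Type*} [CommRing A] [Fintype ι] {V : A →+ A} {K I : Ideal A}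
  {B : Matrix (ι ⊕ Fin 1) (ι ⊕ Fin 1) A}

theorem fromBlocks_zero_mul_apply_inr_eq_zero (hKV : ∀ x ∈ K, ∀ y, x * V y = 0)
    (hBhh : B (Sum.inr 0) (Sum.inr 0) ∈ Set.range V) {b : Matrix ι (Fin 1) A}
    (hb : ∀ i j, b i j ∈ K) (x : ι ⊕ Fin 1) :
    (fromBlocks 0 b 0 0 * B : Matrix _ _ A) x (Sum.inr 0) = 0 := by
  obtain ⟨u, hu⟩ := hBhh
  rcases x with i | i <;>
    simp [Matrix.mul_apply, Fintype.sum_sum_type, ← hu, hKV _ (hb _ _)]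

theorem exists_lastCol_sub_mul_mem_range (hI : (I : Set A) = Set.range V)
    (hKV : ∀ x ∈ K, ∀ y, x * V y = 0) (hBhh : B (Sum.inr 0) (Sum.inr 0) ∈ Set.range V)
    {a : Matrix ι ι A} {b : Matrix ι (Fin 1) A} {c : Matrix (Fin 1) ι A}
    {d : Matrix (Fin 1) (Fin 1) A} (hb : ∀ i j, b i j ∈ K) (hd : ∀ i j, d i j ∈ K) :
    ∃ lam ∈ K, ∀ i, (fromBlocks 0 b 0 0 * B - B * fromBlocks a (b.map V) c d : Matrix _ _ A)
      i (Sum.inr 0) - lam * B i (Sum.inr 0) ∈ Set.range V := by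
  refine ⟨-d 0 0, K.neg_mem (hd 0 0), fun i => ?_⟩
  have hVI (y : A) : V y ∈ I := by rw [← SetLike.mem_coe, hI]; exact Set.mem_range_self y
  have hcol : (fromBlocks 0 b 0 0 * B - B * fromBlocks a (b.map V) c d : Matrix _ _ A) i (Sum.inr 0)
      - -d 0 0 * B i (Sum.inr 0) = -∑ j, B i (Sum.inl j) * V (b j 0) := by
    simp [Matrix.sub_apply, fromBlocks_zero_mul_apply_inr_eq_zero hKV hBhh hb, Matrix.mul_apply,
      Fintype.sum_sum_type, mul_comm]
  rw [hcol, ← hI]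
  exact I.neg_mem (I.sum_mem fun j _ => I.mul_mem_left _ (hVI _))

theorem exists_fromBlocks_of_lastCol_sub_mul_mem_range [DecidableEq ι]
    (hI : (I : Set A) = Set.range V) (hKV : ∀ x ∈ K, ∀ y, x * V y = 0)
    (hVK : ∀ x, V x ∈ K ↔ x ∈ K) (hB : IsUnit B) (hBhh : B (Sum.inr 0) (Sum.inr 0) ∈ Set.range V)
    {t : Matrix (ι ⊕ Fin 1) (ι ⊕ Fin 1) A} (ht : t ∈ K.matrix _) {lam : A}
    (hcol : ∀ i, t i (Sum.inr 0) - lam * B i (Sum.inr 0) ∈ Set.range V) :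
    ∃ (a : Matrix ι ι A) (b : Matrix ι (Fin 1) A) (c : Matrix (Fin 1) ι A)
      (d : Matrix (Fin 1) (Fin 1) A),
      (∀ i j, a i j ∈ K) ∧ (∀ i j, b i j ∈ K) ∧ (∀ i j, c i j ∈ K) ∧ (∀ i j, d i j ∈ K) ∧
      t = fromBlocks 0 b 0 0 * B - B * fromBlocks a (b.map V) c d := by
  have hdet : IsUnit B.det := (isUnit_iff_isUnit_det B).mp hB
  have hCt (i : ι) : (B⁻¹ * t) (Sum.inl i) (Sum.inr 0) ∈ I := by
    have hCB : (B⁻¹ * B) (Sum.inl i) (Sum.inr 0) = 0 := by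
      rw [nonsing_inv_mul B hdet, one_apply_ne Sum.inl_ne_inr]
    have hsum : (B⁻¹ * t) (Sum.inl i) (Sum.inr 0)
        = ∑ l, B⁻¹ (Sum.inl i) l * (t l (Sum.inr 0) - lam * B l (Sum.inr 0)) := by
      simp only [mul_sub, Finset.sum_sub_distrib, mul_left_comm _ lam, ← Finset.mul_sum,
        ← Matrix.mul_apply, hCB, mul_zero, sub_zero]
    rw [hsum]
    refine I.sum_mem fun l _ => I.mul_mem_left _ ?_
    rw [← SetLike.mem_coe, hI]
    exact hcol l
  choose z hz using fun i =>
    (hI ▸ I.neg_mem (hCt i) : -(B⁻¹ * t) (Sum.inl i) (Sum.inr 0) ∈ Set.range V)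
  have hzK (i : ι) : z i ∈ K := (hVK _).mp <| by
    rw [hz]
    exact K.neg_mem ((K.matrix _).mul_mem_left B⁻¹ ht _ _)
  obtain ⟨b, hbz⟩ : ∃ b : Matrix ι (Fin 1) A, ∀ i j, b i j = z i :=
    ⟨of fun i _ => z i, fun _ _ => rfl⟩
  have hb (i j) : b i j ∈ K := hbz i j ▸ hzK i
  set M := B⁻¹ * (fromBlocks 0 b 0 0 * B - t)
  have hM : M ∈ K.matrix _ := (K.matrix _).mul_mem_left _ <| sub_mem
    (Ideal.matrix_mul_mem_right (Ideal.fromBlocks_mem_matrix (by simp) hb (by simp) (by simp)) B) ht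
  have hM₁₂ : M.toBlocks₁₂ = b.map V := by
    ext i j
    obtain rfl : j = 0 := Subsingleton.elim j 0
    have hEB : (B⁻¹ * (fromBlocks 0 b 0 0 * B) : Matrix _ _ A) (Sum.inl i) (Sum.inr 0) = 0 := by
      simp only [Matrix.mul_apply (M := B⁻¹), fromBlocks_zero_mul_apply_inr_eq_zero hKV hBhh hb,
        mul_zero, Finset.sum_const_zero]
    simp [M, toBlocks₁₂, Matrix.mul_sub, hEB, hbz, hz]
  refine ⟨M.toBlocks₁₁, b, M.toBlocks₂₁, M.toBlocks₂₂, fun i j => hM _ _, hb, fun i j => hM _ _,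
    fun i j => hM _ _, ?_⟩
  rw [← hM₁₂, fromBlocks_toBlocks, mul_nonsing_inv_cancel_left _ _ hdet, sub_sub_cancel]

theorem setOf_fromBlocks_mul_sub_mul_fromBlocks_eq [DecidableEq ι]
    (hI : (I : Set A) = Set.range V) (hKV : ∀ x ∈ K, ∀ y, x * V y = 0)
    (hVK : ∀ x, V x ∈ K ↔ x ∈ K) (hB : IsUnit B) (hBhh : B (Sum.inr 0) (Sum.inr 0) ∈ Set.range V) :
    {t : Matrix (ι ⊕ Fin 1) (ι ⊕ Fin 1) A | ∃ (a : Matrix ι ι A) (b : Matrix ι (Fin 1) A)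
        (c : Matrix (Fin 1) ι A) (d : Matrix (Fin 1) (Fin 1) A),
        (∀ i j, a i j ∈ K) ∧ (∀ i j, b i j ∈ K) ∧ (∀ i j, c i j ∈ K) ∧ (∀ i j, d i j ∈ K) ∧
        t = fromBlocks 0 b 0 0 * B - B * fromBlocks a (b.map V) c d} =
    {t | (∀ i j, t i j ∈ K) ∧
      ∃ lam ∈ K, ∀ i, t i (Sum.inr 0) - lam * B i (Sum.inr 0) ∈ Set.range V} := by
  ext t
  constructor
  · rintro ⟨a, b, c, d, ha, hb, hc, hd, rfl⟩
    have hE := Ideal.fromBlocks_mem_matrix (K := K) (a := 0) (c := 0) (d := 0)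
      (fun _ _ => K.zero_mem) hb (fun _ _ => K.zero_mem) (fun _ _ => K.zero_mem)
    have hM := Ideal.fromBlocks_mem_matrix ha (fun i j => (hVK _).mpr (hb i j)) hc hd
    exact ⟨sub_mem (Ideal.matrix_mul_mem_right hE B) ((K.matrix _).mul_mem_left B hM),
      exists_lastCol_sub_mul_mem_range hI hKV hBhh hb hd⟩
  · rintro ⟨ht, lam, -, hcol⟩
    exact exists_fromBlocks_of_lastCol_sub_mul_mem_range hI hKV hVK hB hBhh ht hcol

end BlockCoboundary

open Matrix WittVector in
theorem display_tangent_space_identification_general (p : ℕ) [Fact p.Prime]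
    (k : Type) [Field k] [CharP k p] (n : ℕ)
    (K : Ideal (WittVector p (DualNumber k)))
    (hK : K = RingHom.ker
      (WittVector.map (p := p) (TrivSqZeroExt.fstHom k k k).toRingHom))
    (Bk : Matrix (Fin n ⊕ Fin 1) (Fin n ⊕ Fin 1) (WittVector p k)) (hBk : IsUnit Bk)
    (B : Matrix (Fin n ⊕ Fin 1) (Fin n ⊕ Fin 1) (WittVector p (DualNumber k)))
    (hBdef : B = Bk.map ⇑(WittVector.map (p := p) (algebraMap k (DualNumber k))))
    (hBhh : B (Sum.inr 0) (Sum.inr 0) ∈ Set.range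
      ⇑(WittVector.verschiebung : WittVector p (DualNumber k) →+ WittVector p (DualNumber k))) :
    {t : Matrix (Fin n ⊕ Fin 1) (Fin n ⊕ Fin 1) (WittVector p (DualNumber k)) |
      ∃ (a : Matrix (Fin n) (Fin n) (WittVector p (DualNumber k)))
        (b : Matrix (Fin n) (Fin 1) (WittVector p (DualNumber k)))
        (c : Matrix (Fin 1) (Fin n) (WittVector p (DualNumber k)))
        (d : Matrix (Fin 1) (Fin 1) (WittVector p (DualNumber k))),
        (∀ i j, a i j ∈ K) ∧ (∀ i j, b i j ∈ K) ∧ (∀ i j, c i j ∈ K) ∧ (∀ i j, d i j ∈ K) ∧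
        t = Matrix.fromBlocks 0 b 0 0 * B -
          B * Matrix.fromBlocks a
            (b.map ⇑(WittVector.verschiebung (p := p) (R := DualNumber k))) c d} =
    {t : Matrix (Fin n ⊕ Fin 1) (Fin n ⊕ Fin 1) (WittVector p (DualNumber k)) |
      (∀ i j, t i j ∈ K) ∧
      ∃ lam ∈ K, ∀ i, t i (Sum.inr 0) - lam * B i (Sum.inr 0) ∈ Set.range
        ⇑(WittVector.verschiebung :
          WittVector p (DualNumber k) →+ WittVector p (DualNumber k))} := by
  have hB : IsUnit B := by
    rw [hBdef, ← RingHom.mapMatrix_apply]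
    exact hBk.map _
  have : CharP (DualNumber k) p := charP_of_injective_algebraMap TrivSqZeroExt.inl_injective p
  have hnil (r : DualNumber k) (hr : r ∈ TrivSqZeroExt.kerIdeal k k) : r ^ p = 0 :=
    TrivSqZeroExt.pow_eq_zero_of_mem_kerIdeal (Fact.out : p.Prime).two_le hr
  subst hK
  exact setOf_fromBlocks_mul_sub_mul_fromBlocks_eq ker_constantCoeff_eq_range_verschiebung
    (fun _ hx => mul_verschiebung_eq_zero_of_mem_ker_map hnil hx)
    (verschiebung_mem_ker_map_iff _) hB hBhh

open Matrix WittVector in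
/-- Over `R = k[ε]/(ε²)` with `K = ker(W(R) → W(k))`: for an invertible matrix `B` over `W(k)`
(viewed over `W(R)`) of size `h = n + 1 ≥ 2` whose lower-right entry lies in `I = v(W(R))`,
the set of matrices `[0, b; 0, 0]·B − B·[a, v(b); c, d]` with `a, b, c, d` having entries
in `K` equals the set of `K`-matrices `t` whose final column is congruent mod `I` to a
multiple (by some `λ ∈ K`) of the final column of `B`. -/
theorem display_tangent_space_identification (p : ℕ) [Fact p.Prime]
    (k : Type) [Field k] [CharP k p] (n : ℕ) (hn : 1 ≤ n)
    (K : Ideal (WittVector p (DualNumber k)))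
    (hK : K = RingHom.ker
      (WittVector.map (p := p) (TrivSqZeroExt.fstHom k k k).toRingHom))
    (Bk : Matrix (Fin n ⊕ Fin 1) (Fin n ⊕ Fin 1) (WittVector p k)) (hBk : IsUnit Bk)
    (B : Matrix (Fin n ⊕ Fin 1) (Fin n ⊕ Fin 1) (WittVector p (DualNumber k)))
    (hBdef : B = Bk.map ⇑(WittVector.map (p := p) (algebraMap k (DualNumber k))))
    (hBhh : B (Sum.inr 0) (Sum.inr 0) ∈ Set.range
      ⇑(WittVector.verschiebung : WittVector p (DualNumber k) →+ WittVector p (DualNumber k))) :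
    {t : Matrix (Fin n ⊕ Fin 1) (Fin n ⊕ Fin 1) (WittVector p (DualNumber k)) |
      ∃ (a : Matrix (Fin n) (Fin n) (WittVector p (DualNumber k)))
        (b : Matrix (Fin n) (Fin 1) (WittVector p (DualNumber k)))
        (c : Matrix (Fin 1) (Fin n) (WittVector p (DualNumber k)))
        (d : Matrix (Fin 1) (Fin 1) (WittVector p (DualNumber k))),
        (∀ i j, a i j ∈ K) ∧ (∀ i j, b i j ∈ K) ∧ (∀ i j, c i j ∈ K) ∧ (∀ i j, d i j ∈ K) ∧
        t = Matrix.fromBlocks 0 b 0 0 * B -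
          B * Matrix.fromBlocks a
            (b.map ⇑(WittVector.verschiebung (p := p) (R := DualNumber k))) c d} =
    {t : Matrix (Fin n ⊕ Fin 1) (Fin n ⊕ Fin 1) (WittVector p (DualNumber k)) |
      (∀ i j, t i j ∈ K) ∧
      ∃ lam ∈ K, ∀ i, t i (Sum.inr 0) - lam * B i (Sum.inr 0) ∈ Set.range
        ⇑(WittVector.verschiebung :
          WittVector p (DualNumber k) →+ WittVector p (DualNumber k))} :=
  display_tangent_space_identification_general p k n K hK Bk hBk B hBdef hBhh
end

section
/- Let p be a prime, R a commutative ring, h ≥ 1, and 0 ≤ d ≤ h. Let φ = [a, v(b); c, e] be an invertible h × h matrix over W(R) in block form, where a is d × d, b is d × (h−d), c is (h−d) × d, and e is (h−d) × (h−d). Let B be an invertible h × h matrix over W(R), and let D be the h × h diagonal matrix over W(R) whose first d diagonal entries are 1 and whose last h−d diagonal entries are p. Set B' = [f(a), b; p·f(c), f(e)] · B · φ⁻¹. Then B' and the entrywise Frobenius f(φ) are invertible, and φ · (B⁻¹ · D) · f(φ)⁻¹ = (B')⁻¹ · D. -/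
/-!
With `M = [f(a), b; p·f(c), f(e)]`, the relation `f(v(x)) = p·x` gives `f(φ) = [f(a), p·b; f(c), f(e)]`,
and moving the factor `p` across the diagonal matrix `D` gives `M · D = D · f(φ)`. Hence
`D · f(φ)⁻¹ = M⁻¹ · D` as soon as `M` is invertible, and `B'⁻¹ = φ · B⁻¹ · M⁻¹` turns this into the
claim. Invertibility of `M` comes from `det M = det f(φ)`: over `S[X]` with `p` replaced by `X`,
taking determinants in the block identity gives this equality times `X ^ e`, a non-zero-divisor,
and one specializes `X ↦ p`.
-/

open Matrix

section BlockScaling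

open Polynomial

variable {S : Type*} [CommRing S] {m n : Type*} [Fintype m] [Fintype n] [DecidableEq m]
  [DecidableEq n]

theorem fromBlocks_smul₂₁_mul_fromBlocks_one_smul (q : S) (A : Matrix m m S)
    (B : Matrix m n S) (C : Matrix n m S) (D : Matrix n n S) :
    fromBlocks A B (q • C) D * fromBlocks 1 0 0 (q • 1) =
      fromBlocks 1 0 0 (q • 1) * fromBlocks A (q • B) C D := by
  simp [fromBlocks_multiply]

theorem det_fromBlocks_one_smul (q : S) :
    (fromBlocks (1 : Matrix m m S) 0 0 (q • 1 : Matrix n n S)).det = q ^ Fintype.card n := by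
  rw [det_fromBlocks_zero₂₁, det_one, det_smul, det_one, one_mul, mul_one]

theorem det_fromBlocks_smul₂₁ (q : S) (A : Matrix m m S) (B : Matrix m n S)
    (C : Matrix n m S) (D : Matrix n n S) :
    (fromBlocks A B (q • C) D).det = (fromBlocks A (q • B) C D).det := by
  have generic : (fromBlocks (A.map Polynomial.C) (B.map Polynomial.C)
      ((X : S[X]) • C.map Polynomial.C) (D.map Polynomial.C)).det =
      (fromBlocks (A.map Polynomial.C) ((X : S[X]) • B.map Polynomial.C) (C.map Polynomial.C)
        (D.map Polynomial.C)).det := by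
    have h := congrArg det (fromBlocks_smul₂₁_mul_fromBlocks_one_smul (X : S[X])
      (A.map Polynomial.C) (B.map Polynomial.C) (C.map Polynomial.C) (D.map Polynomial.C))
    rw [det_mul, det_mul, det_fromBlocks_one_smul, mul_comm] at h
    exact (isRegular_X_pow _).left h
  have := congrArg (evalRingHom q) generic
  rw [RingHom.map_det, RingHom.map_det] at this
  convert this using 2 <;> ext (i | i) (j | j) <;> simp [mul_comm q]

theorem mul_nonsing_inv_eq_nonsing_inv_mul_of_mul_eq {M N P : Matrix n n S} (hM : IsUnit M)
    (hN : IsUnit N) (h : M * P = P * N) : P * N⁻¹ = M⁻¹ * P := by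
  calc P * N⁻¹ = M⁻¹ * (M * P) * N⁻¹ := by
        rw [nonsing_inv_mul_cancel_left _ _ ((isUnit_iff_isUnit_det M).mp hM)]
    _ = M⁻¹ * P := by
        rw [h, ← mul_assoc, mul_nonsing_inv_cancel_right _ _ ((isUnit_iff_isUnit_det N).mp hN)]

end BlockScaling

section WittMatrices

variable {p : ℕ} [Fact p.Prime] {R : Type*} [CommRing R] {k l m n : Type*}

theorem map_frobenius_map_verschiebung (b : Matrix m n (WittVector p R)) :
    (b.map WittVector.verschiebung).map WittVector.frobenius = (p : WittVector p R) • b := by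
  ext i j
  simp [WittVector.frobenius_verschiebung, mul_comm]

theorem map_frobenius_fromBlocks_verschiebung (a : Matrix k l (WittVector p R))
    (b : Matrix k n (WittVector p R)) (c : Matrix m l (WittVector p R))
    (e : Matrix m n (WittVector p R)) :
    (fromBlocks a (b.map WittVector.verschiebung) c e).map WittVector.frobenius =
      fromBlocks (a.map WittVector.frobenius) ((p : WittVector p R) • b)
        (c.map WittVector.frobenius) (e.map WittVector.frobenius) := by
  rw [fromBlocks_map, map_frobenius_map_verschiebung]

end WittMatrices

open Matrix WittVector in
theorem display_operator_change_of_coordinates_general (p : ℕ) [Fact p.Prime]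
    (R : Type) [CommRing R] (d e : ℕ)
    (a : Matrix (Fin d) (Fin d) (WittVector p R))
    (b : Matrix (Fin d) (Fin e) (WittVector p R))
    (c : Matrix (Fin e) (Fin d) (WittVector p R))
    (eblk : Matrix (Fin e) (Fin e) (WittVector p R))
    (φ : Matrix (Fin d ⊕ Fin e) (Fin d ⊕ Fin e) (WittVector p R))
    (hφdef : φ = Matrix.fromBlocks a
      (b.map ⇑(WittVector.verschiebung (p := p) (R := R))) c eblk)
    (hφ : IsUnit φ)
    (B : Matrix (Fin d ⊕ Fin e) (Fin d ⊕ Fin e) (WittVector p R)) (hB : IsUnit B)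
    (D : Matrix (Fin d ⊕ Fin e) (Fin d ⊕ Fin e) (WittVector p R))
    (hD : D = Matrix.fromBlocks 1 0 0 ((p : WittVector p R) • 1))
    (B' : Matrix (Fin d ⊕ Fin e) (Fin d ⊕ Fin e) (WittVector p R))
    (hB'def : B' = Matrix.fromBlocks
      (a.map ⇑(WittVector.frobenius : WittVector p R →+* WittVector p R)) b
      ((p : WittVector p R) • c.map ⇑(WittVector.frobenius : WittVector p R →+* WittVector p R))
      (eblk.map ⇑(WittVector.frobenius : WittVector p R →+* WittVector p R)) * B * φ⁻¹) :
    IsUnit B' ∧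
    IsUnit (φ.map ⇑(WittVector.frobenius : WittVector p R →+* WittVector p R)) ∧
    φ * (B⁻¹ * D) *
      (φ.map ⇑(WittVector.frobenius : WittVector p R →+* WittVector p R))⁻¹ = B'⁻¹ * D := by
  set M := fromBlocks (a.map frobenius) b ((p : WittVector p R) • c.map frobenius)
    (eblk.map frobenius)
  set ψ := φ.map (frobenius : WittVector p R →+* WittVector p R) with hψ_def
  have hψ_blocks : ψ = fromBlocks (a.map frobenius) ((p : WittVector p R) • b)
      (c.map frobenius) (eblk.map frobenius) := by
    rw [hψ_def, hφdef, map_frobenius_fromBlocks_verschiebung]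
  have hψ : IsUnit ψ := hφ.map (frobenius : WittVector p R →+* WittVector p R).mapMatrix
  have hM : IsUnit M := by
    rwa [isUnit_iff_isUnit_det, det_fromBlocks_smul₂₁, ← hψ_blocks, ← isUnit_iff_isUnit_det]
  have hMD : M * D = D * ψ := by
    rw [hD, hψ_blocks]
    exact fromBlocks_smul₂₁_mul_fromBlocks_one_smul _ _ _ _ _
  have hB'_inv : B'⁻¹ = φ * B⁻¹ * M⁻¹ := by
    rw [hB'def, Matrix.mul_inv_rev, Matrix.mul_inv_rev,
      nonsing_inv_nonsing_inv _ ((isUnit_iff_isUnit_det φ).mp hφ), mul_assoc]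
  refine ⟨hB'def ▸ (hM.mul hB).mul (isUnit_nonsing_inv_iff.mpr hφ), hψ, ?_⟩
  rw [hB'_inv, mul_assoc, mul_assoc, mul_nonsing_inv_eq_nonsing_inv_mul_of_mul_eq hM hψ hMD,
    mul_assoc, mul_assoc]

open Matrix WittVector in
/-- Change of coordinates for the semilinear operator of a display of height `h = d + e ≥ 1`
and dimension `d`: if `φ = [a, v(b); c, e]` and `B` are invertible over `W(R)`, `D` is the
diagonal matrix `diag(1, …, 1, p, …, p)` (with `d` ones and `e` entries `p`), and
`B' = [f(a), b; p·f(c), f(e)] · B · φ⁻¹`, then `B'` and `f(φ)` are invertible and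
`φ · (B⁻¹ · D) · f(φ)⁻¹ = B'⁻¹ · D`. -/
theorem display_operator_change_of_coordinates (p : ℕ) [Fact p.Prime]
    (R : Type) [CommRing R] (d e : ℕ) (hde : 1 ≤ d + e)
    (a : Matrix (Fin d) (Fin d) (WittVector p R))
    (b : Matrix (Fin d) (Fin e) (WittVector p R))
    (c : Matrix (Fin e) (Fin d) (WittVector p R))
    (eblk : Matrix (Fin e) (Fin e) (WittVector p R))
    (φ : Matrix (Fin d ⊕ Fin e) (Fin d ⊕ Fin e) (WittVector p R))
    (hφdef : φ = Matrix.fromBlocks a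
      (b.map ⇑(WittVector.verschiebung (p := p) (R := R))) c eblk)
    (hφ : IsUnit φ)
    (B : Matrix (Fin d ⊕ Fin e) (Fin d ⊕ Fin e) (WittVector p R)) (hB : IsUnit B)
    (D : Matrix (Fin d ⊕ Fin e) (Fin d ⊕ Fin e) (WittVector p R))
    (hD : D = Matrix.fromBlocks 1 0 0 ((p : WittVector p R) • 1))
    (B' : Matrix (Fin d ⊕ Fin e) (Fin d ⊕ Fin e) (WittVector p R))
    (hB'def : B' = Matrix.fromBlocks
      (a.map ⇑(WittVector.frobenius : WittVector p R →+* WittVector p R)) b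
      ((p : WittVector p R) • c.map ⇑(WittVector.frobenius : WittVector p R →+* WittVector p R))
      (eblk.map ⇑(WittVector.frobenius : WittVector p R →+* WittVector p R)) * B * φ⁻¹) :
    IsUnit B' ∧
    IsUnit (φ.map ⇑(WittVector.frobenius : WittVector p R →+* WittVector p R)) ∧
    φ * (B⁻¹ * D) *
      (φ.map ⇑(WittVector.frobenius : WittVector p R →+* WittVector p R))⁻¹ = B'⁻¹ * D :=
  display_operator_change_of_coordinates_general p R d e a b c eblk φ hφdef hφ B hB D hD B' hB'def
end

section
/- Let p be a prime and k a perfect field of characteristic p, so that the Frobenius f on W(k) is bijective with inverse f⁻¹. Let h ≥ 1, 0 ≤ d ≤ h, and let B be an invertible h × h matrix over W(k). Write B⁻¹ = [u₁ | u₂] where u₁ consists of the first d columns and u₂ of the last h−d columns, and write B = [w₁; w₂] where w₁ consists of the first d rows and w₂ of the last h−d rows. Define F, V : W(k)^h → W(k)^h by F(x) = [u₁ | p·u₂] · f(x) and V(x) = [v(w₁); f⁻¹(w₂)] · f⁻¹(x), where f, f⁻¹, v are applied entrywise to vectors and matrices. Then F(V(x)) = p·x and V(F(x)) = p·x for all x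 ∈ W(k)^h. -/
open Matrix WittVector in
/-- Over a perfect field `k` of characteristic `p`, a display in matrix form `B` of height
`h = d + e ≥ 1` and dimension `d` recovers a classical Dieudonné module: with
`F(x) = [u₁ | p·u₂] · f(x)` and `V(x) = [v(w₁); f⁻¹(w₂)] · f⁻¹(x)` (where `u₁, u₂` are the
first `d` resp. last `e` columns of `B⁻¹` and `w₁, w₂` the first `d` resp. last `e` rows of
`B`), one has `F(V(x)) = p·x` and `V(F(x)) = p·x`. -/
theorem display_perfect_field_FV_eq_p (p : ℕ) [Fact p.Prime]
    (k : Type) [Field k] [CharP k p] [PerfectRing k p]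
    (finv : WittVector p k → WittVector p k)
    (hfinv₁ : Function.LeftInverse finv
      ⇑(WittVector.frobenius : WittVector p k →+* WittVector p k))
    (hfinv₂ : Function.RightInverse finv
      ⇑(WittVector.frobenius : WittVector p k →+* WittVector p k))
    (d e : ℕ) (hde : 1 ≤ d + e)
    (B : Matrix (Fin d ⊕ Fin e) (Fin d ⊕ Fin e) (WittVector p k)) (hB : IsUnit B)
    (F V : (Fin d ⊕ Fin e → WittVector p k) → (Fin d ⊕ Fin e → WittVector p k))
    (hF : ∀ x, F x =
      (Matrix.of fun i j => match j with
        | Sum.inl _ => B⁻¹ i j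
        | Sum.inr _ => (p : WittVector p k) * B⁻¹ i j).mulVec
        fun i => WittVector.frobenius (x i))
    (hV : ∀ x, V x =
      (Matrix.of fun i j => match i with
        | Sum.inl _ => WittVector.verschiebung (B i j)
        | Sum.inr _ => finv (B i j)).mulVec
        fun i => finv (x i)) :
    ∀ x : Fin d ⊕ Fin e → WittVector p k,
      F (V x) = (p : WittVector p k) • x ∧ V (F x) = (p : WittVector p k) • x := by
  classical
  set g : WittVector p k →+* WittVector p k := (WittVector.frobeniusEquiv p k).symm.toRingHom with hgdef
  have hfg : ∀ a : WittVector p k, WittVector.frobenius (g a) = a := fun a => by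
    simpa [hgdef, WittVector.frobeniusEquiv_apply]
      using (WittVector.frobeniusEquiv p k).apply_symm_apply a
  have hfinj : Function.Injective
      (⇑(WittVector.frobenius : WittVector p k →+* WittVector p k)) := hfinv₁.injective
  have hfinv_eq : finv = ⇑g := by
    funext a
    exact hfinj (by rw [hfinv₂ a, hfg])
  have hgf : ∀ a : WittVector p k, g (WittVector.frobenius a) = a := fun a => by
    rw [← hfinv_eq]; exact hfinv₁ a
  set A : Matrix (Fin d ⊕ Fin e) (Fin d ⊕ Fin e) (WittVector p k) :=
    Matrix.of fun i j => match j with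
      | Sum.inl _ => B⁻¹ i j
      | Sum.inr _ => (p : WittVector p k) * B⁻¹ i j with hA
  set C : Matrix (Fin d ⊕ Fin e) (Fin d ⊕ Fin e) (WittVector p k) :=
    Matrix.of fun i j => match i with
      | Sum.inl _ => WittVector.verschiebung (B i j)
      | Sum.inr _ => finv (B i j) with hC
  have hdet : IsUnit B.det := (Matrix.isUnit_iff_isUnit_det B).mp hB
  have hBinv : B⁻¹ * B = 1 := Matrix.nonsing_inv_mul B hdet
  have hBinv' : B * B⁻¹ = 1 := Matrix.mul_nonsing_inv B hdet
  intro x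
  constructor
  · -- F (V x) = p • x
    rw [hV, hF]
    have h1 : (fun i => WittVector.frobenius ((C.mulVec fun i => finv (x i)) i))
        = (C.map WittVector.frobenius).mulVec (fun i => x i) := by
      funext i
      rw [RingHom.map_mulVec WittVector.frobenius C _ i]
      congr 1
      funext j
      simp [Function.comp, hfinv₂ (x j)]
    rw [h1, Matrix.mulVec_mulVec]
    have key : A * C.map WittVector.frobenius = (p : WittVector p k) • (1 : Matrix (Fin d ⊕ Fin e) (Fin d ⊕ Fin e) (WittVector p k)) := by
      ext i j
      rw [Matrix.mul_apply]
      have step : ∀ j' : Fin d ⊕ Fin e,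
          A i j' * (C.map WittVector.frobenius) j' j = (p : WittVector p k) * (B⁻¹ i j' * B j' j) := by
        intro j'
        cases j' with
        | inl a =>
          simp only [hA, hC, Matrix.map_apply, Matrix.of_apply,
            WittVector.frobenius_verschiebung]
          ring
        | inr a =>
          simp only [hA, hC, Matrix.map_apply, Matrix.of_apply, hfinv_eq, hfg]
          ring
      rw [Finset.sum_congr rfl fun j' _ => step j', ← Finset.mul_sum,
        ← Matrix.mul_apply, hBinv]
      simp [Matrix.smul_apply, smul_eq_mul]
    rw [key, Matrix.smul_mulVec, Matrix.one_mulVec]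
  · -- V (F x) = p • x
    rw [hF, hV]
    have h2 : (fun i => finv ((A.mulVec fun i => WittVector.frobenius (x i)) i))
        = (A.map g).mulVec (fun i => x i) := by
      funext i
      rw [hfinv_eq, RingHom.map_mulVec g A _ i]
      congr 1
      funext j
      simp [Function.comp, hgf (x j)]
    rw [h2, Matrix.mulVec_mulVec]
    set dv : Fin d ⊕ Fin e → WittVector p k := fun i => match i with
      | Sum.inl _ => WittVector.verschiebung 1
      | Sum.inr _ => (p : WittVector p k) with hdv
    have key : C * A.map g = Matrix.diagonal dv := by
      ext i j
      rw [Matrix.mul_apply, Matrix.diagonal_apply]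
      cases i with
      | inl a =>
        have step : ∀ j' : Fin d ⊕ Fin e,
            C (Sum.inl a) j' * (A.map g) j' j
              = WittVector.verschiebung (B (Sum.inl a) j' * A j' j) := by
          intro j'
          simp only [hC, Matrix.map_apply, Matrix.of_apply]
          calc WittVector.verschiebung (B (Sum.inl a) j') * g (A j' j)
              = WittVector.verschiebung
                  (B (Sum.inl a) j' * WittVector.frobenius (g (A j' j))) :=
                (WittVector.verschiebung_mul_frobenius _ _).symm
            _ = WittVector.verschiebung (B (Sum.inl a) j' * A j' j) := by rw [hfg]
        rw [Finset.sum_congr rfl fun j' _ => step j',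
          ← map_sum (WittVector.verschiebung : WittVector p k →+ WittVector p k)]
        have hsum : ∑ j' : Fin d ⊕ Fin e, B (Sum.inl a) j' * A j' j
            = (B * B⁻¹) (Sum.inl a) j * (match j with
              | Sum.inl _ => (1 : WittVector p k) | Sum.inr _ => (p : WittVector p k)) := by
          rw [Matrix.mul_apply]
          cases j with
          | inl b =>
            simp only [hA, Matrix.of_apply, mul_one]
          | inr b =>
            rw [Finset.sum_mul]
            refine Finset.sum_congr rfl fun j' _ => ?_
            simp only [hA, Matrix.of_apply]
            ring
        rw [hsum, hBinv']
        cases j with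
        | inl b =>
          by_cases hab : a = b
          · subst hab
            simp [hdv, Matrix.one_apply]
          · have h1 : Sum.inl a ≠ (Sum.inl b : Fin d ⊕ Fin e) := by
              simpa using hab
            simp [Matrix.one_apply, h1]
        | inr b =>
          have h1 : Sum.inl a ≠ (Sum.inr b : Fin d ⊕ Fin e) := by simp
          simp [Matrix.one_apply, h1]
      | inr a =>
        have step : ∀ j' : Fin d ⊕ Fin e,
            C (Sum.inr a) j' * (A.map g) j' j = g (B (Sum.inr a) j' * A j' j) := by
          intro j'
          simp only [hC, Matrix.map_apply, Matrix.of_apply, hfinv_eq]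
          exact (map_mul g _ _).symm
        rw [Finset.sum_congr rfl fun j' _ => step j', ← map_sum g]
        have hsum : ∑ j' : Fin d ⊕ Fin e, B (Sum.inr a) j' * A j' j
            = (B * B⁻¹) (Sum.inr a) j * (match j with
              | Sum.inl _ => (1 : WittVector p k) | Sum.inr _ => (p : WittVector p k)) := by
          rw [Matrix.mul_apply]
          cases j with
          | inl b =>
            simp only [hA, Matrix.of_apply, mul_one]
          | inr b =>
            rw [Finset.sum_mul]
            refine Finset.sum_congr rfl fun j' _ => ?_
            simp only [hA, Matrix.of_apply]
            ring
        rw [hsum, hBinv']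
        cases j with
        | inl b =>
          have h1 : Sum.inr a ≠ (Sum.inl b : Fin d ⊕ Fin e) := by simp
          simp [Matrix.one_apply, h1]
        | inr b =>
          by_cases hab : a = b
          · subst hab
            simp [hdv, Matrix.one_apply, map_natCast]
          · have h1 : Sum.inr a ≠ (Sum.inr b : Fin d ⊕ Fin e) := by
              simpa using hab
            simp [Matrix.one_apply, h1]
    rw [key]
    funext i
    rw [Matrix.mulVec_diagonal]
    cases i with
    | inl a =>
      have : (WittVector.verschiebung (1 : WittVector p k)) * x (Sum.inl a) = x (Sum.inl a) * (p : WittVector p k) := by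
        rw [show (WittVector.verschiebung (1 : WittVector p k)) * x (Sum.inl a)
            = WittVector.verschiebung
              ((1 : WittVector p k) * WittVector.frobenius (x (Sum.inl a))) from
          (WittVector.verschiebung_mul_frobenius _ _).symm, one_mul,
          WittVector.verschiebung_frobenius]
      simp only [hdv, Pi.smul_apply, smul_eq_mul]
      rw [this]; ring
    | inr a =>
      simp [hdv, Pi.smul_apply, smul_eq_mul]
end

section
/- Let p be a prime and h ≥ 2. Work in the power series ring T = ℚ_p⟦u₁, …, u_{h−1}⟧ with J the ideal generated by u₁, …, u_{h−1}, and let σ : T → T be the substitution ring endomorphism with σ(u_i) = u_i^p, applied entrywise to matrices. Define the h × h matrices Ψ and Ψ̄ over T by: Ψ_{i,i+1} = p for 1 ≤ i ≤ h−2, Ψ_{h−1,h} = 1, Ψ_{h,1} = p, Ψ_{h,j} = p·u_{h−j+1} for 2 ≤ j ≤ h−1, Ψ_{h,h} = u₁, all other entries 0; and Ψ̄ the same with all u_i replaced by 0 (Ψ̄ is invertible over T since p is invertible in ℚ_p). Then there exists a unique h × h matrix A over T such that every entry of A − I lies in J and A = Ψ · σ(A) · Ψ̄⁻¹. -/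
/-!
`T = ℚ_p⟦u⟧` is `J`-adically complete and separated, and `σ u_i = u_i ^ p` gives `σ J ⊆ J ^ 2`.
Hence `A ↦ Ψ σ(A) Ψ̄⁻¹` turns congruences mod `J ^ (k + 1)` into congruences mod `J ^ (k + 2)`:
it is an adic contraction, and since `Ψ ≡ Ψ̄ mod J` the identity is a fixed point mod `J`.
The iterates of `1` therefore converge to a fixed point, which is unique among matrices `≡ 1 mod J`.
-/

/-- The matrix `Ψ` (1-indexed entries): `Ψ_{i,i+1} = p` for `1 ≤ i ≤ h−2`, `Ψ_{h−1,h} = 1`,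
`Ψ_{h,1} = p`, `Ψ_{h,j} = p·u_{h−j+1}` for `2 ≤ j ≤ h−1`, `Ψ_{h,h} = u₁`, others `0`. -/
def periodPsi (p h : ℕ) (S : Type) [CommRing S] (u : ℕ → S) : Matrix (Fin h) (Fin h) S :=
  Matrix.of fun i j =>
    if (i : ℕ) + 1 ≤ h - 2 ∧ (j : ℕ) + 1 = (i : ℕ) + 2 then (p : S)
    else if (i : ℕ) + 1 = h - 1 ∧ (j : ℕ) + 1 = h then 1
    else if (i : ℕ) + 1 = h ∧ (j : ℕ) + 1 = 1 then (p : S)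
    else if (i : ℕ) + 1 = h ∧ 2 ≤ (j : ℕ) + 1 ∧ (j : ℕ) + 1 ≤ h - 1 then
      (p : S) * u (h - ((j : ℕ) + 1) + 1)
    else if (i : ℕ) + 1 = h ∧ (j : ℕ) + 1 = h then u 1
    else 0

section AdicFixedPoint

variable {R : Type*} [CommRing R] {I : Ideal R}

theorem IsHausdorff.eq_zero_of_forall_mem_pow [IsHausdorff I R] {x : R}
    (hx : ∀ k, x ∈ I ^ k) : x = 0 :=
  IsHausdorff.haus ‹_› x fun k => by
    rw [SModEq.sub_mem, sub_zero, smul_eq_mul, Ideal.mul_top]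
    exact hx k

theorem IsPrecomplete.exists_forall_sub_mem_pow [IsPrecomplete I R] {f : ℕ → R}
    (hf : ∀ k, f (k + 1) - f k ∈ I ^ k) : ∃ L, ∀ k, f k - L ∈ I ^ k := by
  have cauchy : ∀ {k l}, k ≤ l → f l - f k ∈ I ^ k := by
    intro k l hkl
    induction l, hkl using Nat.le_induction with
    | base => simp
    | succ l hkl ih =>
      rw [← sub_add_sub_cancel]
      exact add_mem (Ideal.pow_le_pow_right hkl (hf l)) ih
  obtain ⟨L, hL⟩ := IsPrecomplete.prec ‹_› (f := f) fun hkl => by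
    rw [SModEq.sub_mem, smul_eq_mul, Ideal.mul_top, ← neg_mem_iff, neg_sub]
    exact cauchy hkl
  refine ⟨L, fun k => ?_⟩
  simpa [SModEq.sub_mem, smul_eq_mul, Ideal.mul_top] using hL k

namespace Matrix

variable {m n : Type*} {F : Matrix m n R → Matrix m n R}

variable (I F) in
def IsAdicContraction : Prop :=
  ∀ k X Y, (∀ i j, (X - Y) i j ∈ I ^ (k + 1)) → ∀ i j, (F X - F Y) i j ∈ I ^ (k + 2)

theorem eq_of_adic_contraction [IsHausdorff I R] (hF : IsAdicContraction I F)
    {A A' : Matrix m n R} (hA : A = F A) (hA' : A' = F A') (h : ∀ i j, (A - A') i j ∈ I) :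
    A = A' := by
  have close : ∀ k i j, (A - A') i j ∈ I ^ (k + 1) := by
    intro k
    induction k with
    | zero => simpa using h
    | succ k ih => rw [hA, hA']; exact hF k A A' ih
  ext i j
  rw [← sub_eq_zero]
  refine IsHausdorff.eq_zero_of_forall_mem_pow (I := I) fun k => ?_
  exact Ideal.pow_le_pow_right k.le_succ (close k i j)

theorem exists_eq_of_adic_contraction [IsAdicComplete I R] (hF : IsAdicContraction I F)
    {A₀ : Matrix m n R} (h₀ : ∀ i j, (F A₀ - A₀) i j ∈ I) :
    ∃ A, (∀ i j, (A - A₀) i j ∈ I) ∧ A = F A := by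
  set s : ℕ → Matrix m n R := fun k => F^[k] A₀
  have hs : ∀ k, s (k + 1) = F (s k) := fun k => Function.iterate_succ_apply' F k A₀
  have step : ∀ k i j, (s (k + 1) - s k) i j ∈ I ^ (k + 1) := by
    intro k
    induction k with
    | zero => simpa [s] using h₀
    | succ k ih =>
      have := hF k _ _ ih
      rwa [← hs, ← hs] at this
  choose L hL using fun i j => IsPrecomplete.exists_forall_sub_mem_pow (I := I)
    (f := fun k => s k i j) fun k => Ideal.pow_le_pow_right k.le_succ (step k i j)
  refine ⟨Matrix.of L, fun i j => ?_, ?_⟩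
  · have := add_mem (step 0 i j) (neg_mem (hL i j 1))
    simpa [s] using this
  · have hsL : ∀ k i j, (s k - Matrix.of L) i j ∈ I ^ k := fun k i j => hL i j k
    ext i j
    rw [← sub_eq_zero]
    refine IsHausdorff.eq_zero_of_forall_mem_pow (I := I) fun k => ?_
    -- `L - F L = (L - s (k + 2)) + (F (s (k + 1)) - F L)`
    have := add_mem (neg_mem (hsL (k + 2) i j)) (hF k _ _ (hsL (k + 1)) i j)
    rw [hs] at this
    exact Ideal.pow_le_pow_right (show k ≤ k + 2 by omega) (by simpa using this)

theorem existsUnique_eq_of_adic_contraction [IsAdicComplete I R] (hF : IsAdicContraction I F)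
    {A₀ : Matrix m n R} (h₀ : ∀ i j, (F A₀ - A₀) i j ∈ I) :
    ∃! A, (∀ i j, (A - A₀) i j ∈ I) ∧ A = F A := by
  obtain ⟨A, hA₀, hA⟩ := exists_eq_of_adic_contraction hF h₀
  refine ⟨A, ⟨hA₀, hA⟩, fun A' ⟨hA'₀, hA'⟩ => eq_of_adic_contraction hF hA' hA fun i j => ?_⟩
  simpa using sub_mem (hA'₀ i j) (hA₀ i j)

end Matrix

end AdicFixedPoint

theorem Ideal.apply_mem_pow_add_two_of_map_le_sq {R : Type*} [CommRing R] {I : Ideal R}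
    {σ : R →+* R} (hσ : I.map σ ≤ I ^ 2) {k : ℕ} {f : R} (hf : f ∈ I ^ (k + 1)) :
    σ f ∈ I ^ (k + 2) := by
  have h : σ f ∈ (I.map σ) ^ (k + 1) := Ideal.map_pow σ I (k + 1) ▸ Ideal.mem_map_of_mem σ hf
  replace h := Ideal.pow_right_mono hσ (k + 1) h
  rw [← pow_mul] at h
  exact Ideal.pow_le_pow_right (by omega) h

namespace MvPowerSeries

variable {τ R : Type*} [CommSemiring R]

theorem eq_X_pow_of_coeff_nsmul {q : ℕ} (hq : q ≠ 0)
    {σ : MvPowerSeries τ R → MvPowerSeries τ R}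
    (hσ₁ : ∀ F e, coeff (q • e) (σ F) = coeff e F)
    (hσ₂ : ∀ F d, (∀ e, d ≠ q • e) → coeff d (σ F) = 0) (i : τ) :
    σ (X i) = X i ^ q := by
  classical
  have hsingle : Finsupp.single i q = q • Finsupp.single i 1 := by simp
  ext d
  rw [coeff_X_pow]
  by_cases hd : ∃ e, d = q • e
  · obtain ⟨e, rfl⟩ := hd
    simp only [hσ₁, coeff_X, hsingle, (nsmul_right_injective hq).eq_iff]
  · push Not at hd
    rw [hσ₂ _ _ hd, if_neg (hsingle ▸ hd _)]

theorem map_span_range_X_le_sq {q : ℕ} (hq : 2 ≤ q)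
    {σ : MvPowerSeries τ R →+* MvPowerSeries τ R} (hσ : ∀ i, σ (X i) = X i ^ q) :
    (Ideal.span (Set.range X)).map σ ≤ Ideal.span (Set.range (X : τ → MvPowerSeries τ R)) ^ 2 := by
  rw [Ideal.map_span, Ideal.span_le]
  rintro _ ⟨_, ⟨i, rfl⟩, rfl⟩
  rw [hσ]
  exact Ideal.pow_le_pow_right hq (Ideal.pow_mem_pow (Ideal.subset_span (Set.mem_range_self i)) q)

end MvPowerSeries

namespace Matrix

variable {l m n R : Type*} [CommRing R] {I : Ideal R}

theorem mul_apply_mem_of_right [Fintype m] (X : Matrix l m R) {Y : Matrix m n R}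
    (hY : ∀ i j, Y i j ∈ I) (i : l) (j : n) : (X * Y) i j ∈ I :=
  Ideal.sum_mem _ fun k _ => I.mul_mem_left _ (hY k j)

theorem mul_apply_mem_of_left [Fintype m] {X : Matrix l m R} (hX : ∀ i j, X i j ∈ I)
    (Y : Matrix m n R) (i : l) (j : n) : (X * Y) i j ∈ I :=
  Ideal.sum_mem _ fun k _ => I.mul_mem_right _ (hX i k)

theorem isAdicContraction_mul_map_mul [Fintype m] [Fintype n] {σ : R →+* R}
    (hσ : I.map σ ≤ I ^ 2) (P : Matrix m m R) (B : Matrix n n R) :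
    IsAdicContraction I fun X : Matrix m n R => P * X.map σ * B := by
  intro k X Y hXY i j
  rw [← Matrix.sub_mul, ← Matrix.mul_sub, ← Matrix.map_sub _ (map_sub σ)]
  exact mul_apply_mem_of_left (mul_apply_mem_of_right P fun i j =>
    Ideal.apply_mem_pow_add_two_of_map_le_sq hσ (hXY i j)) B i j

end Matrix

theorem val_finRotate {n : ℕ} (i : Fin n) :
    (finRotate n i : ℕ) = if (i : ℕ) + 1 = n then (0 : ℕ) else i + 1 := by
  cases n with
  | zero => exact i.elim0
  | succ n => simp only [coe_finRotate, Fin.ext_iff, Fin.val_last, Nat.add_right_cancel_iff]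

theorem periodPsi_zero_eq_diagonal_mul_permMatrix (p h : ℕ) (S : Type) [CommRing S] :
    periodPsi p h S (fun _ => 0) =
      Matrix.diagonal (fun i : Fin h => if (i : ℕ) + 2 = h then 1 else (p : S)) *
        (finRotate h).permMatrix S := by
  ext i j
  have hj : finRotate h i = j ↔
      (i : ℕ) + 1 = h ∧ (j : ℕ) = 0 ∨ (i : ℕ) + 1 ≠ h ∧ (j : ℕ) = i + 1 := by
    rw [Fin.ext_iff, val_finRotate]
    split_ifs <;> omega
  have := j.isLt
  simp only [periodPsi, Matrix.of_apply, Matrix.diagonal_mul, PEquiv.toMatrix_toPEquiv_apply,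
    Pi.single_apply, eq_comm (a := j), hj]
  split_ifs <;> first | omega | simp

theorem isUnit_periodPsi_zero {p h : ℕ} {S : Type} [CommRing S] (hp : IsUnit (p : S)) :
    IsUnit (periodPsi p h S fun _ => 0) := by
  rw [Matrix.isUnit_iff_isUnit_det, periodPsi_zero_eq_diagonal_mul_permMatrix, Matrix.det_mul,
    Matrix.det_diagonal, Matrix.det_permutation]
  refine (IsUnit.prod_univ_iff.mpr fun i => ?_).mul (Units.isUnit _ |>.map (Int.castRingHom S))
  split_ifs
  exacts [isUnit_one, hp]

theorem periodPsi_sub_periodPsi_zero_mem {p h : ℕ} {S : Type} [CommRing S] {I : Ideal S}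
    {u : ℕ → S} (hu : ∀ k, u k ∈ I) (i j : Fin h) :
    (periodPsi p h S u - periodPsi p h S fun _ => 0) i j ∈ I := by
  simp only [periodPsi, Matrix.sub_apply, Matrix.of_apply]
  split_ifs <;> simp [hu, I.mul_mem_left]

theorem horizontal_sections_exist_unique_general (p : ℕ) [Fact p.Prime] (h : ℕ)
    (σ : MvPowerSeries (Fin (h - 1)) ℚ_[p] →+* MvPowerSeries (Fin (h - 1)) ℚ_[p])
    (hσ₁ : ∀ (F : MvPowerSeries (Fin (h - 1)) ℚ_[p]) (e : Fin (h - 1) →₀ ℕ),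
      MvPowerSeries.coeff (p • e) (σ F) = MvPowerSeries.coeff e F)
    (hσ₂ : ∀ (F : MvPowerSeries (Fin (h - 1)) ℚ_[p]) (d : Fin (h - 1) →₀ ℕ),
      (∀ e : Fin (h - 1) →₀ ℕ, d ≠ p • e) → MvPowerSeries.coeff d (σ F) = 0)
    (J : Ideal (MvPowerSeries (Fin (h - 1)) ℚ_[p]))
    (hJ : J = Ideal.span (Set.range
      (MvPowerSeries.X : Fin (h - 1) → MvPowerSeries (Fin (h - 1)) ℚ_[p])))
    (uX : ℕ → MvPowerSeries (Fin (h - 1)) ℚ_[p])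
    (huX : uX = fun i => if hi : i - 1 < h - 1 then MvPowerSeries.X ⟨i - 1, hi⟩ else 0) :
    IsUnit (periodPsi p h (MvPowerSeries (Fin (h - 1)) ℚ_[p]) fun _ => 0) ∧
    ∃! A : Matrix (Fin h) (Fin h) (MvPowerSeries (Fin (h - 1)) ℚ_[p]),
      (∀ i j, (A - 1) i j ∈ J) ∧
      A = periodPsi p h (MvPowerSeries (Fin (h - 1)) ℚ_[p]) uX * A.map ⇑σ *
        (periodPsi p h (MvPowerSeries (Fin (h - 1)) ℚ_[p]) fun _ => 0)⁻¹ := by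
  have hp := Fact.out (p := p.Prime)
  have hpT : IsUnit (p : MvPowerSeries (Fin (h - 1)) ℚ_[p]) := by
    simpa using (isUnit_iff_ne_zero.mpr (Nat.cast_ne_zero.mpr hp.ne_zero) :
      IsUnit (p : ℚ_[p])).map MvPowerSeries.C
  have hΨ₀ := isUnit_periodPsi_zero (h := h) hpT
  refine ⟨hΨ₀, ?_⟩
  subst hJ
  have hσJ := MvPowerSeries.map_span_range_X_le_sq hp.two_le
    (MvPowerSeries.eq_X_pow_of_coeff_nsmul hp.ne_zero hσ₁ hσ₂)
  have huJ : ∀ k, uX k ∈ Ideal.span (Set.range MvPowerSeries.X) := by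
    intro k
    rw [huX]
    dsimp only
    split_ifs
    exacts [Ideal.subset_span (Set.mem_range_self _), zero_mem _]
  refine Matrix.existsUnique_eq_of_adic_contraction
    (Matrix.isAdicContraction_mul_map_mul hσJ _ _) fun i j => ?_
  rw [Matrix.map_one _ (map_zero σ) (map_one σ), Matrix.mul_one,
    ← Matrix.mul_nonsing_inv _ ((Matrix.isUnit_iff_isUnit_det _).mp hΨ₀), ← Matrix.sub_mul]
  exact Matrix.mul_apply_mem_of_left (periodPsi_sub_periodPsi_zero_mem huJ) _ i j

/-- In `T = ℚ_p⟦u₁, …, u_{h−1}⟧`, with `σ` the substitution endomorphism `u_i ↦ u_i^p`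
(characterized on coefficients), `J = (u₁, …, u_{h−1})`, and `Ψ, Ψ̄` as above (with
`u_i` the variables, resp. `u_i = 0`; `Ψ̄` is invertible since `p` is invertible in `ℚ_p`),
there is a unique matrix `A` with `A ≡ I mod J` and `A = Ψ·σ(A)·Ψ̄⁻¹`. -/
theorem horizontal_sections_exist_unique (p : ℕ) [Fact p.Prime] (h : ℕ) (hh : 2 ≤ h)
    (σ : MvPowerSeries (Fin (h - 1)) ℚ_[p] →+* MvPowerSeries (Fin (h - 1)) ℚ_[p])
    (hσ₁ : ∀ (F : MvPowerSeries (Fin (h - 1)) ℚ_[p]) (e : Fin (h - 1) →₀ ℕ),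
      MvPowerSeries.coeff (p • e) (σ F) = MvPowerSeries.coeff e F)
    (hσ₂ : ∀ (F : MvPowerSeries (Fin (h - 1)) ℚ_[p]) (d : Fin (h - 1) →₀ ℕ),
      (∀ e : Fin (h - 1) →₀ ℕ, d ≠ p • e) → MvPowerSeries.coeff d (σ F) = 0)
    (J : Ideal (MvPowerSeries (Fin (h - 1)) ℚ_[p]))
    (hJ : J = Ideal.span (Set.range
      (MvPowerSeries.X : Fin (h - 1) → MvPowerSeries (Fin (h - 1)) ℚ_[p])))
    (uX : ℕ → MvPowerSeries (Fin (h - 1)) ℚ_[p])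
    (huX : uX = fun i => if hi : i - 1 < h - 1 then MvPowerSeries.X ⟨i - 1, hi⟩ else 0) :
    IsUnit (periodPsi p h (MvPowerSeries (Fin (h - 1)) ℚ_[p]) fun _ => 0) ∧
    ∃! A : Matrix (Fin h) (Fin h) (MvPowerSeries (Fin (h - 1)) ℚ_[p]),
      (∀ i j, (A - 1) i j ∈ J) ∧
      A = periodPsi p h (MvPowerSeries (Fin (h - 1)) ℚ_[p]) uX * A.map ⇑σ *
        (periodPsi p h (MvPowerSeries (Fin (h - 1)) ℚ_[p]) fun _ => 0)⁻¹ :=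
  horizontal_sections_exist_unique_general p h σ hσ₁ hσ₂ J hJ uX huX
end

section
/- Let p be a prime and h ≥ 2, and let A be the unique h × h matrix over T = ℚ_p⟦u₁, …, u_{h−1}⟧ with all entries of A − I in J = (u₁, …, u_{h−1}) satisfying A = Ψ · σ(A) · Ψ̄⁻¹, where σ(u_i) = u_i^p and Ψ, Ψ̄ are as follows: Ψ_{i,i+1} = p for 1 ≤ i ≤ h−2, Ψ_{h−1,h} = 1, Ψ_{h,1} = p, Ψ_{h,j} = p·u_{h−j+1} for 2 ≤ j ≤ h−1, Ψ_{h,h} = u₁, all other entries 0, and Ψ̄ is Ψ with all u_i replaced by 0. Then A ≡ I + E mod J^p, where E is the matrix with E_{h,j} = u_{h−j} for 1 ≤ j ≤ h−1 and all other entries 0; that is, every entry of A − (I + E) lies in J^p. -/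
/-- The matrix `E` with `E_{h,j} = u_{h−j}` for `1 ≤ j ≤ h−1` and all other entries `0`
(1-indexed). -/
def periodE (h : ℕ) (S : Type) [CommRing S] (u : ℕ → S) : Matrix (Fin h) (Fin h) S :=
  Matrix.of fun i j =>
    if (i : ℕ) + 1 = h ∧ (j : ℕ) + 1 ≤ h - 1 then u (h - ((j : ℕ) + 1)) else 0

/-!
`Ψ̄` is a monomial matrix and `Ψ` differs from it only in the last row, so a direct computation
gives `Ψ · Ψ̄⁻¹ = I + E`, and the functional equation becomes `A − (I + E) = Ψ · σ(A − I) · Ψ̄⁻¹`.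
The coefficient conditions say that `σ` is the expansion `F ↦ F(u₁ᵖ, …, u_{h−1}ᵖ)`, which
multiplies orders by `p`. It therefore sends `J` to series of order `≥ p`, and every such series
lies in `J^p`.
-/

namespace MvPowerSeries

section CommSemiring

variable {σ R : Type*} [CommSemiring R]

theorem exists_eq_sum_X_mul_of_lt_order [Fintype σ] [LinearOrder σ] {f : MvPowerSeries σ R}
    {m : ℕ} (hf : (m : ℕ∞) < f.order) :
    ∃ g : σ → MvPowerSeries σ R, (∀ i, (m : ℕ∞) ≤ (g i).order) ∧ f = ∑ i, X i * g i := by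
  classical
  -- `X i * g i` collects the monomials of `f` whose smallest variable is `X i`
  let g : σ → MvPowerSeries σ R := fun i d =>
    if (d + Finsupp.single i 1).support.min = (i : WithTop σ) then
      coeff (d + Finsupp.single i 1) f else 0
  have coeff_g (i : σ) (d : σ →₀ ℕ) : coeff d (g i) =
      if (d + Finsupp.single i 1).support.min = (i : WithTop σ) then
        coeff (d + Finsupp.single i 1) f else 0 :=
    rfl
  have coeff_X_mul_g (i : σ) (d : σ →₀ ℕ) :
      coeff d (X i * g i) = if d.support.min = (i : WithTop σ) then coeff d f else 0 := by
    rw [X, coeff_monomial_mul, one_mul]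
    by_cases hmin : d.support.min = (i : WithTop σ)
    · have hid : Finsupp.single i 1 ≤ d := Finsupp.single_le_iff.mpr
        (Nat.one_le_iff_ne_zero.mpr (Finsupp.mem_support_iff.mp (Finset.mem_of_min hmin)))
      rw [if_pos hid, if_pos hmin, coeff_g, tsub_add_cancel_of_le hid, if_pos hmin]
    · rw [if_neg hmin]
      split_ifs with hid
      · rw [coeff_g, tsub_add_cancel_of_le hid, if_neg hmin]
      · rfl
  refine ⟨g, fun i => le_order fun d hd => ?_, ?_⟩
  · rw [coeff_g, ite_eq_right_iff]
    intro _
    refine coeff_of_lt_order (lt_of_le_of_lt ?_ hf)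
    rw [map_add, Finsupp.degree_single]
    exact_mod_cast Order.add_one_le_of_lt (by exact_mod_cast hd)
  · ext d
    rw [map_sum]
    simp only [coeff_X_mul_g]
    cases hmin : d.support.min with
    | top =>
      rw [Finset.min_eq_top, Finsupp.support_eq_empty] at hmin
      subst hmin
      simp only [WithTop.top_ne_coe, if_false, Finset.sum_const_zero]
      exact coeff_of_lt_order (d := 0) (by simpa using pos_of_gt hf)
    | coe a =>
      simp [WithTop.coe_inj]

theorem mem_span_range_X_pow_of_le_order [Finite σ] {f : MvPowerSeries σ R} {m : ℕ}
    (hf : (m : ℕ∞) ≤ f.order) : f ∈ Ideal.span (Set.range X) ^ m := by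
  cases nonempty_fintype σ
  let : LinearOrder σ := LinearOrder.lift' _ (Fintype.equivFin σ).injective
  induction m generalizing f with
  | zero => simp
  | succ m ih =>
    obtain ⟨g, hg, rfl⟩ :=
      exists_eq_sum_X_mul_of_lt_order ((Nat.cast_lt.mpr m.lt_succ_self).trans_le hf)
    rw [pow_succ']
    exact Ideal.sum_mem _ fun i _ => Ideal.mul_mem_mul (Ideal.subset_span ⟨i, rfl⟩) (ih (hg i))

theorem constantCoeff_eq_zero_of_mem_span_range_X {f : MvPowerSeries σ R}
    (hf : f ∈ Ideal.span (Set.range X)) : constantCoeff f = 0 := by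
  refine (Ideal.span_le (I := RingHom.ker constantCoeff)).mpr ?_ hf
  rintro _ ⟨i, rfl⟩
  exact constantCoeff_X i

end CommSemiring

section CommRing

variable {σ R : Type*} [CommRing R] {p : ℕ} (hp : p ≠ 0)

theorem expand_eq_of_coeff {f g : MvPowerSeries σ R}
    (hsmul : ∀ e, coeff (p • e) g = coeff e f) (hnot : ∀ d, (∀ e, d ≠ p • e) → coeff d g = 0) :
    expand p hp f = g := by
  ext d
  by_cases hd : ∀ e, d ≠ p • e
  · rw [hnot d hd]
    obtain ⟨i, hi⟩ : ∃ i, ¬ p ∣ d i := by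
      by_contra! hdvd
      refine hd (d.mapRange (· / p) (Nat.zero_div p)) ?_
      ext i
      simp [Nat.mul_div_cancel' (hdvd i)]
    exact coeff_expand_of_not_dvd p hp f hi
  · obtain ⟨e, rfl⟩ := not_forall_not.mp hd
    rw [coeff_expand_smul, hsmul]

theorem expand_mem_span_range_X_pow [Finite σ] {f : MvPowerSeries σ R}
    (hf : f ∈ Ideal.span (Set.range X)) : expand p hp f ∈ Ideal.span (Set.range X) ^ p := by
  refine mem_span_range_X_pow_of_le_order ?_
  rw [order_expand]
  simpa using nsmul_le_nsmul_right
    (one_le_order_iff_constCoeff_eq_zero.mpr (constantCoeff_eq_zero_of_mem_span_range_X hf)) p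

end CommRing

end MvPowerSeries

section PeriodMatrices

variable {h : ℕ} {S : Type} [CommRing S]

/-- For `p * c = 1` this is the inverse of `Ψ̄ = periodPsi p h S fun _ => 0`. -/
def periodPsiBarInv (h : ℕ) (S : Type) [CommRing S] (c : S) : Matrix (Fin h) (Fin h) S :=
  Matrix.of fun r k => if (r : ℕ) = ((k : ℕ) + 1) % h then (if (k : ℕ) + 2 = h then 1 else c) else 0

theorem mul_periodPsiBarInv_apply (M : Matrix (Fin h) (Fin h) S) (c : S) (i k : Fin h) :
    (M * periodPsiBarInv h S c) i k =
      M i ⟨((k : ℕ) + 1) % h, Nat.mod_lt _ k.pos⟩ * if (k : ℕ) + 2 = h then 1 else c := by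
  rw [Matrix.mul_apply, Finset.sum_eq_single_of_mem ⟨((k : ℕ) + 1) % h, Nat.mod_lt _ k.pos⟩
    (Finset.mem_univ _)]
  · simp [periodPsiBarInv]
  · intro r _ hr
    simp [periodPsiBarInv, Fin.ext_iff.not.mp hr]

theorem periodPsi_mul_periodPsiBarInv (p : ℕ) (u : ℕ → S) {c : S} (hpc : (p : S) * c = 1) :
    periodPsi p h S u * periodPsiBarInv h S c = 1 + periodE h S u := by
  ext i k
  rw [mul_periodPsiBarInv_apply]
  simp only [periodPsi, periodE, Matrix.of_apply, Matrix.add_apply, Matrix.one_apply, Fin.ext_iff]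
  obtain hk | hk : (k : ℕ) + 1 < h ∨ (k : ℕ) + 1 = h := by omega
  · simp only [Nat.mod_eq_of_lt hk, show h - ((k : ℕ) + 1 + 1) + 1 = h - ((k : ℕ) + 1) by omega]
    split_ifs <;> first
      | (exfalso; omega)
      | ring1
      | linear_combination hpc
      | linear_combination u (h - ((k : ℕ) + 1)) * hpc
      | (rw [show h - ((k : ℕ) + 1) = 1 by omega]; ring1)
  · simp only [hk, Nat.mod_self, and_true]
    split_ifs <;> first
      | (exfalso; omega)
      | ring1
      | linear_combination hpc

theorem periodE_zero : periodE h S (fun _ => 0) = 0 := by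
  ext
  simp [periodE]

theorem sub_one_add_periodE_eq (p : ℕ) (u : ℕ → S) {c : S} (hpc : (p : S) * c = 1)
    (σ : S →+* S) {A : Matrix (Fin h) (Fin h) S}
    (hA : A = periodPsi p h S u * A.map σ * (periodPsi p h S fun _ => 0)⁻¹) :
    A - (1 + periodE h S u) = periodPsi p h S u * (A - 1).map σ * periodPsiBarInv h S c := by
  have hinv : (periodPsi p h S fun _ => 0)⁻¹ = periodPsiBarInv h S c :=
    Matrix.inv_eq_right_inv (by rw [periodPsi_mul_periodPsiBarInv p _ hpc, periodE_zero, add_zero])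
  conv_lhs => rw [hA, hinv, ← periodPsi_mul_periodPsiBarInv p u hpc]
  simp only [← σ.mapMatrix_apply, map_sub, map_one, mul_sub, sub_mul, mul_one]

end PeriodMatrices

theorem horizontal_sections_congruent_period_matrix_general (p : ℕ) [Fact p.Prime]
    (h : ℕ)
    (σ : MvPowerSeries (Fin (h - 1)) ℚ_[p] →+* MvPowerSeries (Fin (h - 1)) ℚ_[p])
    (hσ₁ : ∀ (F : MvPowerSeries (Fin (h - 1)) ℚ_[p]) (e : Fin (h - 1) →₀ ℕ),
      MvPowerSeries.coeff (p • e) (σ F) = MvPowerSeries.coeff e F)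
    (hσ₂ : ∀ (F : MvPowerSeries (Fin (h - 1)) ℚ_[p]) (d : Fin (h - 1) →₀ ℕ),
      (∀ e : Fin (h - 1) →₀ ℕ, d ≠ p • e) → MvPowerSeries.coeff d (σ F) = 0)
    (J : Ideal (MvPowerSeries (Fin (h - 1)) ℚ_[p]))
    (hJ : J = Ideal.span (Set.range
      (MvPowerSeries.X : Fin (h - 1) → MvPowerSeries (Fin (h - 1)) ℚ_[p])))
    (uX : ℕ → MvPowerSeries (Fin (h - 1)) ℚ_[p])
    (A : Matrix (Fin h) (Fin h) (MvPowerSeries (Fin (h - 1)) ℚ_[p]))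
    (hA₁ : ∀ i j, (A - 1) i j ∈ J)
    (hA₂ : A = periodPsi p h (MvPowerSeries (Fin (h - 1)) ℚ_[p]) uX * A.map ⇑σ *
      (periodPsi p h (MvPowerSeries (Fin (h - 1)) ℚ_[p]) fun _ => 0)⁻¹) :
    ∀ i j, (A - (1 + periodE h (MvPowerSeries (Fin (h - 1)) ℚ_[p]) uX)) i j ∈ J ^ p := by
  have hp : p ≠ 0 := (Fact.out : p.Prime).ne_zero
  have hσ (F : MvPowerSeries (Fin (h - 1)) ℚ_[p]) : σ F = MvPowerSeries.expand p hp F :=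
    (MvPowerSeries.expand_eq_of_coeff hp (hσ₁ F) (hσ₂ F)).symm
  have hpc : (p : MvPowerSeries (Fin (h - 1)) ℚ_[p]) * MvPowerSeries.C (p : ℚ_[p])⁻¹ = 1 := by
    rw [← map_natCast MvPowerSeries.C, ← map_mul,
      mul_inv_cancel₀ (Nat.cast_ne_zero.mpr hp), map_one]
  have hmap : (A - 1).map σ ∈ (J ^ p).toTwoSided.matrix (Fin h) :=
    (TwoSidedIdeal.mem_matrix _ _ _).mpr fun i j => by
      rw [Matrix.map_apply, hσ, Ideal.mem_toTwoSided, hJ]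
      exact MvPowerSeries.expand_mem_span_range_X_pow hp (hJ ▸ hA₁ i j)
  rw [sub_one_add_periodE_eq p uX hpc σ hA₂]
  intro i j
  refine Ideal.mem_toTwoSided.mp ((TwoSidedIdeal.mem_matrix _ _ _).mp ?_ i j)
  exact TwoSidedIdeal.mul_mem_right _ _ _ (TwoSidedIdeal.mul_mem_left _ _ _ hmap)

/-- In `T = ℚ_p⟦u₁, …, u_{h−1}⟧`: if `A ≡ I mod J` satisfies `A = Ψ·σ(A)·Ψ̄⁻¹`, then
`A ≡ I + E mod J^p`, i.e. every entry of `A − (I + E)` lies in `J^p`. -/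
theorem horizontal_sections_congruent_period_matrix (p : ℕ) [Fact p.Prime]
    (h : ℕ) (hh : 2 ≤ h)
    (σ : MvPowerSeries (Fin (h - 1)) ℚ_[p] →+* MvPowerSeries (Fin (h - 1)) ℚ_[p])
    (hσ₁ : ∀ (F : MvPowerSeries (Fin (h - 1)) ℚ_[p]) (e : Fin (h - 1) →₀ ℕ),
      MvPowerSeries.coeff (p • e) (σ F) = MvPowerSeries.coeff e F)
    (hσ₂ : ∀ (F : MvPowerSeries (Fin (h - 1)) ℚ_[p]) (d : Fin (h - 1) →₀ ℕ),
      (∀ e : Fin (h - 1) →₀ ℕ, d ≠ p • e) → MvPowerSeries.coeff d (σ F) = 0)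
    (J : Ideal (MvPowerSeries (Fin (h - 1)) ℚ_[p]))
    (hJ : J = Ideal.span (Set.range
      (MvPowerSeries.X : Fin (h - 1) → MvPowerSeries (Fin (h - 1)) ℚ_[p])))
    (uX : ℕ → MvPowerSeries (Fin (h - 1)) ℚ_[p])
    (huX : uX = fun i => if hi : i - 1 < h - 1 then MvPowerSeries.X ⟨i - 1, hi⟩ else 0)
    (A : Matrix (Fin h) (Fin h) (MvPowerSeries (Fin (h - 1)) ℚ_[p]))
    (hA₁ : ∀ i j, (A - 1) i j ∈ J)
    (hA₂ : A = periodPsi p h (MvPowerSeries (Fin (h - 1)) ℚ_[p]) uX * A.map ⇑σ *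
      (periodPsi p h (MvPowerSeries (Fin (h - 1)) ℚ_[p]) fun _ => 0)⁻¹) :
    ∀ i j, (A - (1 + periodE h (MvPowerSeries (Fin (h - 1)) ℚ_[p]) uX)) i j ∈ J ^ p :=
  horizontal_sections_congruent_period_matrix_general p h σ hσ₁ hσ₂ J hJ uX A hA₁ hA₂
end

section
/- Let p be a prime, h ≥ 2, and R a commutative ring containing an element ζ with ζ^(p^h − 1) = 1, and elements u₁, …, u_{h−1}. Define the h × h matrix B(u₁, …, u_{h−1}) over the p-typical Witt ring W(R) by: B_{i,i−1} = 1 for 2 ≤ i ≤ h, B_{1,h} = 1, B_{i,h} = [u_{h−i+1}] (the Teichmüller lift) for 2 ≤ i ≤ h, and all other entries 0. Let φ be the diagonal matrix over W(R) with φ_{ii} = [ζ^(p^(h−i))] for 1 ≤ i ≤ h. Then φ is invertible and f(φ) · B(ζ^(1−p)·u₁, ζ^(1−p²)·u₂, …, ζ^(1−p^(h−1))·u_{h−1}) · φ⁻¹ = B(u₁, …, u_{h−1}), where f(φ) denotes the entrywise Frobenius. -/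
/-!
Teichmüller lifts are multiplicative and `f [x] = [x^p]`, so conjugating by the diagonal matrix
`φ` multiplies the `(i, j)` entry of `B` by `[ζ^(p^(h-i) - p^(h-j-1))]` (0-indexed). On the
subdiagonal this exponent is `0`; in the last column it is `p^(h-i) - 1`, which is exactly undone
by the twist `ζ^(1-p^(h-i))` of `u_{h-i}`; in the corner it is `p^h - 1`, killed by `ζ^(p^h-1) = 1`.
-/

/-- The matrix form `B(u₁, …, u_{h−1})` of the standard display of height `h` and dimension
`h−1` (1-indexed entries): `B_{i,i−1} = 1` for `2 ≤ i ≤ h`, `B_{1,h} = 1`,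
`B_{i,h} = [u_{h−i+1}]` (Teichmüller lift) for `2 ≤ i ≤ h`, all other entries `0`. -/
noncomputable def standardDisplayMatrix (p h : ℕ) [Fact p.Prime] (R : Type) [CommRing R]
    (u : ℕ → R) : Matrix (Fin h) (Fin h) (WittVector p R) :=
  Matrix.of fun i j =>
    if 2 ≤ (i : ℕ) + 1 ∧ ((j : ℕ) + 1) + 1 = (i : ℕ) + 1 then 1
    else if (i : ℕ) + 1 = 1 ∧ (j : ℕ) + 1 = h then 1
    else if 2 ≤ (i : ℕ) + 1 ∧ (j : ℕ) + 1 = h then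
      WittVector.teichmuller p (u (h - ((i : ℕ) + 1) + 1))
    else 0

namespace WittVector

variable (p : ℕ) [Fact p.Prime] {R : Type} [CommRing R]

private theorem frobenius_teichmuller_rat {S : Type} (x : MvPolynomial S ℚ) :
    frobenius (teichmuller p x) = teichmuller p (x ^ p) := by
  apply (ghostMap.bijective_of_invertible p (MvPolynomial S ℚ)).1
  ext1 n
  rw [ghostMap_apply, ghostMap_apply, ghostComponent_frobenius, ghostComponent_teichmuller,
    ghostComponent_teichmuller, ← pow_mul, ← pow_succ']

private theorem frobenius_teichmuller_int {S : Type} (x : MvPolynomial S ℤ) :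
    frobenius (teichmuller p x) = teichmuller p (x ^ p) := by
  refine map_injective (MvPolynomial.map (Int.castRingHom ℚ))
    (MvPolynomial.map_injective _ Int.cast_injective) ?_
  rw [(frobenius_isPoly p).map, map_teichmuller, map_teichmuller, frobenius_teichmuller_rat,
    map_pow (MvPolynomial.map _)]

theorem frobenius_teichmuller (r : R) :
    frobenius (teichmuller p r) = teichmuller p (r ^ p) := by
  obtain ⟨x, rfl⟩ := MvPolynomial.counit_surjective R r
  rw [← map_teichmuller, ← (frobenius_isPoly p).map, frobenius_teichmuller_int, map_teichmuller,
    map_pow (MvPolynomial.counit R)]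

theorem teichmuller_zpow_mul_zpow (ζ : Rˣ) (m n : ℤ) :
    teichmuller p ((ζ ^ m : Rˣ) : R) * teichmuller p ((ζ ^ n : Rˣ) : R) =
      teichmuller p ((ζ ^ (m + n) : Rˣ) : R) := by
  rw [← map_mul, ← Units.val_mul, ← zpow_add]

theorem frobenius_teichmuller_zpow (ζ : Rˣ) (n : ℤ) :
    frobenius (teichmuller p ((ζ ^ n : Rˣ) : R)) = teichmuller p ((ζ ^ (p * n) : Rˣ) : R) := by
  rw [frobenius_teichmuller, ← Units.val_pow_eq_pow_val, ← zpow_natCast, ← zpow_mul, mul_comm]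

end WittVector

theorem Matrix.isUnit_diagonal_units {n α : Type*} [Fintype n] [DecidableEq n] [CommRing α]
    (v : n → αˣ) : IsUnit (Matrix.diagonal fun i => (v i : α)) :=
  Matrix.isUnit_diagonal.2 (Pi.isUnit_iff.2 fun i => (v i).isUnit)

theorem Matrix.inv_diagonal_units {n α : Type*} [Fintype n] [DecidableEq n] [CommRing α]
    (v : n → αˣ) : (Matrix.diagonal fun i => (v i : α))⁻¹ = Matrix.diagonal fun i => ↑(v i)⁻¹ := by
  refine Matrix.inv_eq_left_inv ?_
  simp [Matrix.diagonal_mul_diagonal]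

open WittVector

theorem standardDisplayMatrix_twist_apply {p h : ℕ} [Fact p.Prime] {R : Type} [CommRing R]
    {ζ : Rˣ} (hζ : ζ ^ (p ^ h - 1) = 1) (u : ℕ → R) (i j : Fin h) :
    standardDisplayMatrix p h R (fun k => ((ζ ^ ((1 : ℤ) - (p : ℤ) ^ k) : Rˣ) : R) * u k) i j =
      teichmuller p ((ζ ^ ((p : ℤ) ^ (h - (j + 1)) - (p : ℤ) ^ (h - i)) : Rˣ) : R) *
        standardDisplayMatrix p h R u i j := by
  have hi := i.is_lt
  have hj := j.is_lt
  simp only [standardDisplayMatrix, Matrix.of_apply]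
  split_ifs with h_sub h_corner h_col
  · rw [show h - (j + 1) = h - i by omega, sub_self, zpow_zero, Units.val_one, map_one, mul_one]
  · have hζ' : ζ ^ ((1 : ℤ) - (p : ℤ) ^ h) = 1 := by
      have hp : 1 ≤ p ^ h := Nat.one_le_pow h p (Fact.out : p.Prime).pos
      have hcast : ((p ^ h - 1 : ℕ) : ℤ) = (p : ℤ) ^ h - 1 := by
        rw [Nat.cast_sub hp, Nat.cast_pow, Nat.cast_one]
      rw [← neg_sub, zpow_neg, ← hcast, zpow_natCast, hζ, inv_one]
    rw [show h - (j + 1) = 0 by omega, show (i : ℕ) = 0 by omega, pow_zero, Nat.sub_zero, hζ',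
      Units.val_one, map_one, mul_one]
  · rw [show h - (j + 1) = 0 by omega, show h - (i + 1) + 1 = h - i by omega, pow_zero, map_mul]
  · rw [mul_zero]

open WittVector in
theorem standardDisplay_root_of_unity_action_general (p : ℕ) [Fact p.Prime] (h : ℕ)
    (R : Type) [CommRing R] (ζ : Rˣ) (hζ : ζ ^ (p ^ h - 1) = 1) (u : ℕ → R)
    (φ : Matrix (Fin h) (Fin h) (WittVector p R))
    (hφdef : φ = Matrix.diagonal fun i : Fin h =>
      WittVector.teichmuller p ((ζ : R) ^ (p ^ (h - ((i : ℕ) + 1))))) :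
    IsUnit φ ∧
    (φ.map ⇑(WittVector.frobenius : WittVector p R →+* WittVector p R)) *
        standardDisplayMatrix p h R
          (fun i => ((ζ ^ ((1 : ℤ) - (p : ℤ) ^ i) : Rˣ) : R) * u i) * φ⁻¹ =
      standardDisplayMatrix p h R u := by
  have hpow (k : ℕ) : ((ζ ^ (p : ℤ) ^ k : Rˣ) : R) = (ζ : R) ^ p ^ k := by
    rw [← Nat.cast_pow, zpow_natCast, Units.val_pow_eq_pow_val]
  let τ : Rˣ →* (WittVector p R)ˣ := Units.map (teichmuller p : R →* WittVector p R)
  have hφ : φ = Matrix.diagonal fun i : Fin h =>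
      ((τ (ζ ^ (p : ℤ) ^ (h - ((i : ℕ) + 1))) : (WittVector p R)ˣ) : WittVector p R) := by
    simp only [hφdef, τ, Units.coe_map, hpow]
  rw [hφ]
  refine ⟨Matrix.isUnit_diagonal_units _, ?_⟩
  rw [Matrix.inv_diagonal_units, Matrix.diagonal_map (map_zero _)]
  refine Matrix.ext fun i j => ?_
  rw [Matrix.mul_diagonal, Matrix.diagonal_mul, standardDisplayMatrix_twist_apply hζ]
  simp only [τ, ← map_inv, ← zpow_neg, Units.coe_map, frobenius_teichmuller_zpow]
  have hpi : (p : ℤ) * p ^ (h - ((i : ℕ) + 1)) = p ^ (h - i) := by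
    rw [← pow_succ']
    congr 1
    omega
  rw [hpi, ← mul_assoc, teichmuller_zpow_mul_zpow, mul_right_comm, teichmuller_zpow_mul_zpow,
    add_sub_cancel, add_neg_cancel, zpow_zero, Units.val_one, map_one, one_mul]

open WittVector in
/-- For a `(p^h − 1)`-st root of unity `ζ`, the action
`ζ · (u₁, …, u_{h−1}) = (ζ^(1−p)u₁, …, ζ^(1−p^(h−1))u_{h−1})` lifts to an isomorphism of
displays via the diagonal change-of-coordinates matrix `φ = diag([ζ^(p^(h−1))], …, [ζ^p], [ζ])`:
`φ` is invertible and `f(φ) · B(ζ^(1−p)u₁, …, ζ^(1−p^(h−1))u_{h−1}) · φ⁻¹ = B(u₁, …, u_{h−1})`. -/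
theorem standardDisplay_root_of_unity_action (p : ℕ) [Fact p.Prime] (h : ℕ) (hh : 2 ≤ h)
    (R : Type) [CommRing R] (ζ : Rˣ) (hζ : ζ ^ (p ^ h - 1) = 1) (u : ℕ → R)
    (φ : Matrix (Fin h) (Fin h) (WittVector p R))
    (hφdef : φ = Matrix.diagonal fun i : Fin h =>
      WittVector.teichmuller p ((ζ : R) ^ (p ^ (h - ((i : ℕ) + 1))))) :
    IsUnit φ ∧
    (φ.map ⇑(WittVector.frobenius : WittVector p R →+* WittVector p R)) *
        standardDisplayMatrix p h R
          (fun i => ((ζ ^ ((1 : ℤ) - (p : ℤ) ^ i) : Rˣ) : R) * u i) * φ⁻¹ =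
      standardDisplayMatrix p h R u :=
  standardDisplay_root_of_unity_action_general p h R ζ hζ u φ hφdef
end
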